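/- arXiv:2007.00956 — 11 statements merged into one kernel-verified Lean document; each statement's English description precedes it below -/
import Mathlib

section
/- Let L be a number field and let v ∈ L be irrational (v ∉ ℚ). Then for every primitive element α of L (indeed, for every α with L = ℚ(v)(α)) and every polynomial f ∈ ℚ[x] with f(α) = v, one has deg f ≥ [L : ℚ(v)]. Consequently min deg_L(v) ≥ [L : ℚ(v)]. -/
/-!
Over `K = ℚ(v)` the element `α` is a root of `f - v`, a nonzero polynomial of degree `deg f`
with coefficients in `K`. Since `L = K(α)`, the degree `[L : K]` is the degree of the minimal
polynomial of `α` over `K`, which divides `f - v`.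
-/

/-- The minimal degree of an algebraic number `v ∈ L`: the minimum, over all primitive
elements `α` of `L` (i.e. `ℚ(α) = L`), of the degree of a polynomial `f ∈ ℚ[x]`
with `f(α) = v`. -/
noncomputable def minDegree (L : Type*) [Field L] [Algebra ℚ L] (v : L) : ℕ :=
  sInf {d : ℕ | ∃ α : L, IntermediateField.adjoin ℚ {α} = ⊤ ∧
    ∃ f : Polynomial ℚ, f.natDegree = d ∧ Polynomial.aeval α f = v}

open Polynomial IntermediateField

section

variable {F L : Type*} [Field F] [Field L] [Algebra F L]

theorem IntermediateField.adjoin_simple_adjoin_simple_eq_top {v α : L} (h : F⟮v, α⟯ = ⊤) :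
    F⟮v⟯⟮α⟯ = ⊤ := by
  apply restrictScalars_injective F
  rw [restrictScalars_top, adjoin_simple_adjoin_simple, h]

theorem Polynomial.natDegree_ne_zero_of_aeval_notMem_range {α : L} {f : F[X]}
    (hf : aeval α f ∉ Set.range (algebraMap F L)) : f.natDegree ≠ 0 := by
  intro h
  rw [natDegree_eq_zero] at h
  obtain ⟨c, rfl⟩ := h
  exact hf ⟨c, (aeval_C α c).symm⟩

theorem IntermediateField.finrank_adjoin_simple_le_natDegree {v α : L} (h : F⟮v, α⟯ = ⊤)
    {f : F[X]} (hf : aeval α f = v) (hv : v ∉ Set.range (algebraMap F L)) :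
    Module.finrank F⟮v⟯ L ≤ f.natDegree := by
  set g : F⟮v⟯[X] := f.map (algebraMap F F⟮v⟯) - C (AdjoinSimple.gen F v)
  have hg_root : aeval α g = 0 := by
    simp [g, hf]
  have hg_deg : g.natDegree = f.natDegree := by
    rw [natDegree_sub_C, natDegree_map]
  have hg_ne : g ≠ 0 := by
    intro h0
    rw [h0, natDegree_zero] at hg_deg
    exact natDegree_ne_zero_of_aeval_notMem_range (hf ▸ hv) hg_deg.symm
  have hα : IsIntegral F⟮v⟯ α := isAlgebraic_iff_isIntegral.1 ⟨g, hg_ne, hg_root⟩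
  calc Module.finrank F⟮v⟯ L = (minpoly F⟮v⟯ α).natDegree := by
        rw [← finrank_top', ← adjoin_simple_adjoin_simple_eq_top h, adjoin.finrank hα]
    _ ≤ g.natDegree := natDegree_le_natDegree (minpoly.degree_le_of_ne_zero _ _ hg_ne hg_root)
    _ = f.natDegree := hg_deg

theorem IntermediateField.exists_aeval_eq_of_adjoin_simple_eq_top [Algebra.IsAlgebraic F L]
    {α : L} (hα : F⟮α⟯ = ⊤) (v : L) : ∃ f : F[X], aeval α f = v := by
  have hv : v ∈ Algebra.adjoin F {α} := by
    rw [← adjoin_simple_toSubalgebra_of_isAlgebraic (Algebra.IsAlgebraic.isAlgebraic α), hα]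
    trivial
  rwa [Algebra.adjoin_singleton_eq_range_aeval] at hv

end

/-- If `v ∈ L` is irrational, then for every `α` with `L = ℚ(v)(α)` and every
`f ∈ ℚ[x]` with `f(α) = v` one has `deg f ≥ [L : ℚ(v)]`; consequently
`min deg_L(v) ≥ [L : ℚ(v)]`. -/
theorem stmt_0 (L : Type*) [Field L] [NumberField L] (v : L)
    (hv : v ∉ Set.range (algebraMap ℚ L)) :
    (∀ α : L, IntermediateField.adjoin ℚ {v, α} = ⊤ →
      ∀ f : Polynomial ℚ, Polynomial.aeval α f = v →
        Module.finrank (IntermediateField.adjoin ℚ {v}) L ≤ f.natDegree) ∧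
    Module.finrank (IntermediateField.adjoin ℚ {v}) L ≤ minDegree L v := by
  have key : ∀ α : L, ℚ⟮v, α⟯ = ⊤ → ∀ f : ℚ[X], aeval α f = v →
      Module.finrank ℚ⟮v⟯ L ≤ f.natDegree :=
    fun α hα f hf => finrank_adjoin_simple_le_natDegree hα hf hv
  refine ⟨key, le_csInf ?_ ?_⟩
  -- `sInf ∅ = 0`, so the primitive element theorem is needed to make the bound meaningful.
  · obtain ⟨α, hα⟩ := Field.exists_primitive_element ℚ L
    obtain ⟨f, hf⟩ := exists_aeval_eq_of_adjoin_simple_eq_top hα v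
    exact ⟨_, α, hα, f, rfl, hf⟩
  · rintro d ⟨α, hα, f, rfl, hf⟩
    have hvα : ℚ⟮v, α⟯ = ⊤ := eq_top_iff.2 (hα ▸ adjoin.mono ℚ _ _ (by simp))
    exact key α hvα f hf
end

section
/- Let L = ℚ(√A, √B, √C) be a triquadratic number field and let v ∈ L be an element with [L : ℚ(v)] = 4. Then there exists a primitive element α of L such that deg_α(v) = 4; in particular min deg_L(v) = [L : ℚ(v)] = 4. -/
/-- `L = ℚ(√A, √B, √C)` is a triquadratic number field: `A, B, C, ABC` are distinct
square-free integers, none equal to `0` or `1`, `u, v, w ∈ L` are square roots of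
`A, B, C` generating `L` over `ℚ`, and `[L : ℚ] = 8`. -/
structure IsTriquadratic (A B C : ℤ) (L : Type*) [Field L] [Algebra ℚ L]
    (u v w : L) : Prop where
  sqfA : Squarefree A
  sqfB : Squarefree B
  sqfC : Squarefree C
  sqfABC : Squarefree (A * B * C)
  A_ne_B : A ≠ B
  A_ne_C : A ≠ C
  B_ne_C : B ≠ C
  ABC_ne_A : A * B * C ≠ A
  ABC_ne_B : A * B * C ≠ B
  ABC_ne_C : A * B * C ≠ C
  A_ne_zero : A ≠ 0
  B_ne_zero : B ≠ 0
  C_ne_zero : C ≠ 0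
  A_ne_one : A ≠ 1
  B_ne_one : B ≠ 1
  C_ne_one : C ≠ 1
  ABC_ne_one : A * B * C ≠ 1
  hu : u ^ 2 = algebraMap ℚ L (A : ℚ)
  hv : v ^ 2 = algebraMap ℚ L (B : ℚ)
  hw : w ^ 2 = algebraMap ℚ L (C : ℚ)
  gen : IntermediateField.adjoin ℚ {u, v, w} = ⊤
  deg : Module.finrank ℚ L = 8

/-!
Since `[L : ℚ(x)] = 4`, the field `ℚ(x)` is quadratic, so `t = x + e` satisfies `t² = d ∈ ℚ` for
some `e, d ∈ ℚ`. Adjoining `√A, √B, √C` to `ℚ(t)` one at a time, each step has degree at most `2`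
and the total degree is `4`, so one of them is redundant: `L = ℚ(t, p, q)` for two of the square
roots, say `p² = P`, `q² = Q`. Then `PQ ≠ d`, since otherwise `t = ±pq` and `L = ℚ(p, q)` would
have degree at most `4`.

Put `α = l p + m q` with `l = Q + t`, `m = P - t`. Eliminating `pq` from `α²` gives
`α⁴ - 2(l²P + m²Q)α² + (l²P - m²Q)² = 0`; here `l²P + m²Q` is rational and `(l²P - m²Q)²` is
`c₀ + c₁ t` with `c₁ = 8PQ(Q - P)(PQ - d) ≠ 0`, so `t` is a polynomial of degree `4` in `α`. Since also `pq` and then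
`p, q` are rational functions of `α` and `t`, `α` is primitive. Conversely, if `g(β) = x` for a
primitive `β`, then `β` is a root of `g - x` over `ℚ(x)`, so `deg g ≥ [L : ℚ(x)]`.
-/

open IntermediateField Polynomial Module

theorem quartic_eq_zero_of_sq_eq {R : Type*} [CommRing R] {p q P Q : R} (l m : R)
    (hp : p ^ 2 = P) (hq : q ^ 2 = Q) :
    (l * p + m * q) ^ 4 - 2 * (l ^ 2 * P + m ^ 2 * Q) * (l * p + m * q) ^ 2
      + (l ^ 2 * P - m ^ 2 * Q) ^ 2 = 0 := by
  subst hp hq; ring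

theorem mem_of_mul_add_mul_mem {L : Type*} [Field L] {E : Subfield L} {p q P Q l m : L}
    (hp : p ^ 2 = P) (hq : q ^ 2 = Q) (hlm : 2 * l * m ≠ 0) (hΔ : l ^ 2 * P - m ^ 2 * Q ≠ 0)
    (hα : l * p + m * q ∈ E) (hl : l ∈ E) (hm : m ∈ E) (hP : P ∈ E) (hQ : Q ∈ E) :
    p ∈ E ∧ q ∈ E := by
  set α := l * p + m * q
  -- `α ^ 2 = l ^ 2 P + m ^ 2 Q + 2 l m p q`, and `(α, α p q)` is the image of `(p, q)` under a
  -- linear map of determinant `l ^ 2 P - m ^ 2 Q`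
  have hpq : p * q = (α ^ 2 - (l ^ 2 * P + m ^ 2 * Q)) / (2 * l * m) := by
    rw [eq_div_iff hlm]; subst hp hq; ring
  have hΔE : l ^ 2 * P - m ^ 2 * Q ∈ E :=
    sub_mem (mul_mem (pow_mem hl 2) hP) (mul_mem (pow_mem hm 2) hQ)
  have hpqE : p * q ∈ E := hpq ▸ div_mem (sub_mem (pow_mem hα 2)
    (add_mem (mul_mem (pow_mem hl 2) hP) (mul_mem (pow_mem hm 2) hQ)))
    (mul_mem (mul_mem (ofNat_mem E 2) hl) hm)
  have hβ : α * (p * q) ∈ E := mul_mem hα hpqE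
  constructor
  · have : p = (l * P * α - m * (α * (p * q))) / (l ^ 2 * P - m ^ 2 * Q) := by
      rw [eq_div_iff hΔ]; subst hp hq; ring
    exact this ▸ div_mem (sub_mem (mul_mem (mul_mem hl hP) hα) (mul_mem hm hβ)) hΔE
  · have : q = (l * (α * (p * q)) - m * Q * α) / (l ^ 2 * P - m ^ 2 * Q) := by
      rw [eq_div_iff hΔ]; subst hp hq; ring
    exact this ▸ div_mem (sub_mem (mul_mem hl hβ) (mul_mem (mul_mem hm hQ) hα)) hΔE

section

variable {K L : Type*} [Field K] [Field L] [Algebra K L]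

theorem isIntegral_of_sq_eq_algebraMap {z : L} {c : K} (hz : z ^ 2 = algebraMap K L c) :
    IsIntegral K z :=
  ⟨X ^ 2 - C c, monic_X_pow_sub_C c two_ne_zero, by simp [hz]⟩

theorem natDegree_minpoly_le_two_of_sq_eq {E : Type*} [Field E] [Algebra K E] [Algebra E L]
    [IsScalarTower K E L] {z : L} {c : K} (hz : z ^ 2 = algebraMap K L c) :
    (minpoly E z).natDegree ≤ 2 := by
  have hc : aeval z (X ^ 2 - C (algebraMap K E c)) = 0 := by
    simp [hz, ← IsScalarTower.algebraMap_apply]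
  calc (minpoly E z).natDegree ≤ (X ^ 2 - C (algebraMap K E c)).natDegree :=
        natDegree_le_of_dvd (minpoly.dvd E z hc) (X_pow_sub_C_ne_zero two_pos _)
    _ = 2 := natDegree_X_pow_sub_C

theorem finrank_adjoin_union_singleton (S : Set L) (z : L) :
    finrank K (adjoin K (S ∪ {z})) =
      finrank K (adjoin K S) * finrank (adjoin K S) (adjoin (adjoin K S) {z}) := by
  rw [← adjoin_adjoin_left K S {z}]
  exact (finrank_mul_finrank K (adjoin K S) (adjoin (adjoin K S) {z})).symm

theorem finrank_adjoin_union_sqrt_le (S : Set L) {z : L} {c : K}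
    (hz : z ^ 2 = algebraMap K L c) :
    finrank K (adjoin K (S ∪ {z})) ≤ 2 * finrank K (adjoin K S) := by
  rw [finrank_adjoin_union_singleton, mul_comm,
    adjoin.finrank (isIntegral_of_sq_eq_algebraMap hz).tower_top]
  exact Nat.mul_le_mul_right _ (natDegree_minpoly_le_two_of_sq_eq hz)

theorem finrank_adjoin_union_sqrt_of_notMem {S : Set L} {z : L} {c : K}
    (hz : z ^ 2 = algebraMap K L c) (hzS : z ∉ adjoin K S) :
    finrank K (adjoin K (S ∪ {z})) = 2 * finrank K (adjoin K S) := by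
  have hint := (isIntegral_of_sq_eq_algebraMap hz).tower_top (A := adjoin K S)
  rw [finrank_adjoin_union_singleton, mul_comm, adjoin.finrank hint]
  have hne : (minpoly (adjoin K S) z).natDegree ≠ 1 := fun h1 ↦ by
    obtain ⟨y, hy⟩ := minpoly.natDegree_eq_one_iff.mp h1
    exact hzS (hy ▸ y.2)
  have := minpoly.natDegree_pos hint
  have := natDegree_minpoly_le_two_of_sq_eq (E := adjoin K S) hz
  congr 1
  omega

theorem finrank_adjoin_pair_sqrt_le {p q : L} {P Q : K} (hp : p ^ 2 = algebraMap K L P)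
    (hq : q ^ 2 = algebraMap K L Q) : finrank K (adjoin K {p, q}) ≤ 4 := by
  have h₁ := finrank_adjoin_union_sqrt_le ∅ hp
  have h₂ := finrank_adjoin_union_sqrt_le {p} hq
  rw [Set.empty_union, adjoin_empty, IntermediateField.finrank_bot] at h₁
  rw [Set.singleton_union] at h₂
  omega

theorem eq_top_of_mem_of_adjoin_eq_top {u v w : L} (hgen : adjoin K {u, v, w} = ⊤)
    {E : IntermediateField K L} (hu : u ∈ E) (hv : v ∈ E) (hw : w ∈ E) : E = ⊤ := by
  rw [eq_top_iff, ← hgen, adjoin_le_iff]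
  rintro a (rfl | rfl | rfl) <;> assumption

theorem adjoin_union_pair_eq_top (S : Set L) {u v w : L} {a b c : K}
    (hu : u ^ 2 = algebraMap K L a) (hv : v ^ 2 = algebraMap K L b)
    (hw : w ^ 2 = algebraMap K L c) (hgen : adjoin K {u, v, w} = ⊤)
    (hS : finrank K L ≠ 8 * finrank K (adjoin K S)) :
    adjoin K (S ∪ {v, w}) = ⊤ ∨ adjoin K (S ∪ {u, w}) = ⊤ ∨ adjoin K (S ∪ {u, v}) = ⊤ := by
  have mem (T : Set L) {y : L} (hy : y ∈ T) : y ∈ adjoin K T := subset_adjoin K T hy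
  by_contra! h
  obtain ⟨hvw, huw, huv⟩ := h
  have hu' : u ∉ adjoin K S := fun hu' ↦ hvw <| eq_top_of_mem_of_adjoin_eq_top hgen
    (adjoin.mono K _ _ (by tauto_set) hu') (mem _ (by simp)) (mem _ (by simp))
  have hv' : v ∉ adjoin K (S ∪ {u}) := fun hv' ↦ huw <| eq_top_of_mem_of_adjoin_eq_top hgen
    (mem _ (by simp)) (adjoin.mono K _ _ (by tauto_set) hv') (mem _ (by simp))
  have hw' : w ∉ adjoin K (S ∪ {u} ∪ {v}) := fun hw' ↦ huv <| eq_top_of_mem_of_adjoin_eq_top hgen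
    (mem _ (by simp)) (mem _ (by simp)) (adjoin.mono K _ _ (by tauto_set) hw')
  have htop : adjoin K (S ∪ {u} ∪ {v} ∪ {w}) = ⊤ :=
    eq_top_of_mem_of_adjoin_eq_top hgen (mem _ (by simp)) (mem _ (by simp)) (mem _ (by simp))
  apply hS
  rw [← finrank_top', ← htop, finrank_adjoin_union_sqrt_of_notMem hw hw',
    finrank_adjoin_union_sqrt_of_notMem hv hv', finrank_adjoin_union_sqrt_of_notMem hu hu']
  ring

theorem exists_add_sq_eq_of_natDegree_minpoly_eq_two [NeZero (2 : K)] {x : L}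
    (hx : (minpoly K x).natDegree = 2) :
    ∃ e d : K, (x + algebraMap K L e) ^ 2 = algebraMap K L d := by
  have hint : IsIntegral K x := by
    by_contra h
    simp [minpoly.eq_zero h] at hx
  have h := minpoly.aeval K x
  rw [(minpoly.monic hint).as_sum, hx] at h
  simp only [Finset.sum_range_succ, Finset.sum_range_zero, map_add, map_pow, map_mul, aeval_X,
    aeval_C, pow_zero, pow_one, mul_one, zero_add] at h
  set b := (minpoly K x).coeff 1
  set c := (minpoly K x).coeff 0
  refine ⟨b / 2, (b / 2) ^ 2 - c, ?_⟩
  have h2 : (2 : L) ≠ 0 := map_ofNat (algebraMap K L) 2 ▸ (_root_.map_ne_zero _).mpr two_ne_zero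
  simp only [map_sub, map_pow, map_div₀, map_ofNat]
  field_simp
  linear_combination 4 * h

theorem algebraMap_add_algebraMap_mul_ne_zero {t : L} (ht : t ∉ (⊥ : IntermediateField K L))
    (a : K) {b : K} (hb : b ≠ 0) : algebraMap K L a + algebraMap K L b * t ≠ 0 := fun h ↦ by
  refine ht (mem_bot.mpr ⟨-a / b, ?_⟩)
  rw [map_div₀, map_neg, div_eq_iff ((_root_.map_ne_zero _).mpr hb)]
  linear_combination -h

theorem exists_natDegree_four_aeval_mul_add_mul_eq [NeZero (2 : K)] {t p q l m : L}
    {d P Q S D₀ D₁ : K} (ht : t ^ 2 = algebraMap K L d) (hp : p ^ 2 = algebraMap K L P)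
    (hq : q ^ 2 = algebraMap K L Q)
    (hS : l ^ 2 * algebraMap K L P + m ^ 2 * algebraMap K L Q = algebraMap K L S)
    (hΔ : l ^ 2 * algebraMap K L P - m ^ 2 * algebraMap K L Q =
      algebraMap K L D₀ + algebraMap K L D₁ * t)
    (hD₀ : D₀ ≠ 0) (hD₁ : D₁ ≠ 0) :
    ∃ f : K[X], f.natDegree = 4 ∧ aeval (l * p + m * q) f = t := by
  set a := algebraMap K L
  set α := l * p + m * q
  have hc₁ : 2 * D₀ * D₁ ≠ 0 := mul_ne_zero (mul_ne_zero two_ne_zero hD₀) hD₁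
  have hrel : aeval α (C (2 * S) * X ^ 2 - X ^ 4 - C (D₀ ^ 2 + d * D₁ ^ 2)) =
      a (2 * D₀ * D₁) * t := by
    have h := quartic_eq_zero_of_sq_eq l m hp hq
    rw [hS, hΔ] at h
    simp only [map_sub, map_mul, map_add, map_pow, aeval_C, aeval_X, map_ofNat]
    linear_combination -h + a D₁ ^ 2 * ht
  refine ⟨C (2 * D₀ * D₁)⁻¹ * (C (2 * S) * X ^ 2 - X ^ 4 - C (D₀ ^ 2 + d * D₁ ^ 2)), ?_, ?_⟩
  · rw [natDegree_C_mul (inv_ne_zero hc₁)]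
    compute_degree!
  · rw [map_mul, aeval_C, hrel, map_inv₀,
      inv_mul_cancel_left₀ ((_root_.map_ne_zero _).mpr hc₁)]

theorem exists_natDegree_four_aeval_eq_and_mem_adjoin [NeZero (2 : K)] {t p q : L} {d P Q : K}
    (ht : t ^ 2 = algebraMap K L d) (hp : p ^ 2 = algebraMap K L P)
    (hq : q ^ 2 = algebraMap K L Q) (htK : t ∉ (⊥ : IntermediateField K L))
    (hP : P ≠ 0) (hQ : Q ≠ 0) (hPQ : P ≠ Q) (hd : P * Q ≠ d) :
    ∃ α : L, (∃ f : K[X], f.natDegree = 4 ∧ aeval α f = t) ∧ p ∈ K⟮α⟯ ∧ q ∈ K⟮α⟯ := by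
  have h2 : (2 : K) ≠ 0 := two_ne_zero
  set a := algebraMap K L
  set l := a Q + t
  set m := a P - t
  have hΔ : l ^ 2 * a P - m ^ 2 * a Q =
      a ((Q - P) * (P * Q - d)) + a (2 * 2 * P * Q) * t := by
    simp only [l, m, map_mul, map_sub, map_ofNat]
    linear_combination (a P - a Q) * ht
  have hD₀ : (Q - P) * (P * Q - d) ≠ 0 :=
    mul_ne_zero (sub_ne_zero.mpr hPQ.symm) (sub_ne_zero.mpr hd)
  have hD₁ : 2 * 2 * P * Q ≠ 0 := mul_ne_zero (mul_ne_zero (mul_ne_zero h2 h2) hP) hQ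
  obtain ⟨f, hf, hft⟩ := exists_natDegree_four_aeval_mul_add_mul_eq ht hp hq
    (S := (P + Q) * (P * Q + d))
    (by simp only [l, m, map_mul, map_add]; linear_combination (a P + a Q) * ht) hΔ hD₀ hD₁
  set α := l * p + m * q
  have htα : t ∈ K⟮α⟯ := hft ▸ algebra_adjoin_le_adjoin K {α} (aeval_mem_adjoin_singleton K α)
  have hne := algebraMap_add_algebraMap_mul_ne_zero htK (K := K)
  have hl : l ≠ 0 := by simpa [a] using hne Q one_ne_zero
  have hm : m ≠ 0 := by simpa [a, m, sub_eq_add_neg] using hne P (neg_ne_zero.mpr one_ne_zero)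
  have h2L : (2 : L) ≠ 0 := map_ofNat a 2 ▸ (_root_.map_ne_zero a).mpr h2
  refine ⟨α, ⟨f, hf, hft⟩, mem_of_mul_add_mul_mem (E := K⟮α⟯.toSubfield) hp hq
    (mul_ne_zero (mul_ne_zero h2L hl) hm) (hΔ ▸ hne _ hD₁)
    (mem_adjoin_simple_self K α) (add_mem (algebraMap_mem _ Q) htα)
    (sub_mem (algebraMap_mem _ P) htα) (algebraMap_mem _ P) (algebraMap_mem _ Q)⟩

theorem exists_primitive_natDegree_four_aeval_eq [NeZero (2 : K)] (hL : 4 < finrank K L)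
    {x p q : L} {e d P Q : K} (hx : x ∉ (⊥ : IntermediateField K L))
    (hxe : (x + algebraMap K L e) ^ 2 = algebraMap K L d) (hp : p ^ 2 = algebraMap K L P)
    (hq : q ^ 2 = algebraMap K L Q) (hP : P ≠ 0) (hQ : Q ≠ 0) (hPQ : P ≠ Q)
    (htop : adjoin K {x, p, q} = ⊤) :
    ∃ α : L, K⟮α⟯ = ⊤ ∧ ∃ f : K[X], f.natDegree = 4 ∧ aeval α f = x := by
  set t := x + algebraMap K L e
  have hxt (E : IntermediateField K L) (ht : t ∈ E) : x ∈ E := by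
    simpa [t] using sub_mem ht (E.algebraMap_mem e)
  have htK : t ∉ (⊥ : IntermediateField K L) := fun ht ↦ hx (hxt ⊥ ht)
  have hd : P * Q ≠ d := fun hd ↦ by
    have hpq : p ∈ adjoin K {p, q} ∧ q ∈ adjoin K {p, q} :=
      ⟨subset_adjoin K _ (by simp), subset_adjoin K _ (by simp)⟩
    have hd' : algebraMap K L d = algebraMap K L P * algebraMap K L Q := by rw [← hd, map_mul]
    have ht : t ∈ adjoin K {p, q} := by
      have : (t - p * q) * (t + p * q) = 0 := by
        linear_combination hxe - q ^ 2 * hp - algebraMap K L P * hq + hd'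
      rcases mul_eq_zero.mp this with h | h
      · exact (sub_eq_zero.mp h) ▸ mul_mem hpq.1 hpq.2
      · exact (eq_neg_of_add_eq_zero_left h) ▸ neg_mem (mul_mem hpq.1 hpq.2)
    have := finrank_adjoin_pair_sqrt_le hp hq
    rw [eq_top_of_mem_of_adjoin_eq_top htop (hxt _ ht) hpq.1 hpq.2, finrank_top'] at this
    omega
  obtain ⟨α, ⟨f, hf, hft⟩, hpα, hqα⟩ :=
    exists_natDegree_four_aeval_eq_and_mem_adjoin hxe hp hq htK hP hQ hPQ hd
  have htα : t ∈ K⟮α⟯ := hft ▸ algebra_adjoin_le_adjoin K {α} (aeval_mem_adjoin_singleton K α)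
  exact ⟨α, eq_top_of_mem_of_adjoin_eq_top htop (hxt _ htα) hpα hqα, f - C e,
    by rw [natDegree_sub_C, hf], by simp [hft, t]⟩

theorem finrank_le_natDegree_of_aeval_eq {x β : L} (hβ : K⟮β⟯ = ⊤) {g : K[X]}
    (hg : aeval β g = x) (hx : x ∉ (⊥ : IntermediateField K L)) :
    finrank K⟮x⟯ L ≤ g.natDegree := by
  have hg0 : g.natDegree ≠ 0 := fun h ↦ by
    obtain ⟨c, rfl⟩ := natDegree_eq_zero.mp h
    exact hx (mem_bot.mpr ⟨c, by rw [← hg, aeval_C]⟩)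
  set h : K⟮x⟯[X] := g.map (algebraMap K K⟮x⟯) - C (AdjoinSimple.gen K x)
  have hdeg : h.natDegree = g.natDegree := by rw [natDegree_sub_C, natDegree_map]
  have hh0 : h ≠ 0 := fun h0 ↦ hg0 (by rw [← hdeg, h0, natDegree_zero])
  have hroot : aeval β h = 0 := by simp [h, aeval_map_algebraMap, hg]
  have hint : IsIntegral K⟮x⟯ β := IsAlgebraic.isIntegral ⟨h, hh0, hroot⟩
  rw [← hdeg, ← finrank_top', ← adjoin_eq_top_of_adjoin_eq_top K hβ, adjoin.finrank hint]
  exact natDegree_le_natDegree (minpoly.degree_le_of_ne_zero _ _ hh0 hroot)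

end

theorem minDegree_eq_finrank {L : Type*} [Field L] [Algebra ℚ L] {x : L}
    (hx : x ∉ (⊥ : IntermediateField ℚ L))
    (h : ∃ α : L, ℚ⟮α⟯ = ⊤ ∧ ∃ f : ℚ[X], f.natDegree = finrank ℚ⟮x⟯ L ∧ aeval α f = x) :
    minDegree L x = finrank ℚ⟮x⟯ L :=
  le_antisymm (Nat.sInf_le h) <| le_csInf ⟨_, h⟩ <| by
    rintro k ⟨β, hβ, g, rfl, hg⟩
    exact finrank_le_natDegree_of_aeval_eq hβ hg hx

/-- If `L = ℚ(√A, √B, √C)` is a triquadratic number field and `x ∈ L` satisfies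
`[L : ℚ(x)] = 4`, then there is a primitive element `α` of `L` with `deg_α(x) = 4`;
in particular `min deg_L(x) = [L : ℚ(x)] = 4`. -/
theorem stmt_3 (A B C : ℤ) (L : Type*) [Field L] [Algebra ℚ L] (u v w : L)
    (hL : IsTriquadratic A B C L u v w) (x : L)
    (hx : Module.finrank (IntermediateField.adjoin ℚ {x}) L = 4) :
    (∃ α : L, IntermediateField.adjoin ℚ {α} = ⊤ ∧
      ∃ f : Polynomial ℚ, f.natDegree = 4 ∧ Polynomial.aeval α f = x) ∧
    minDegree L x = 4 := by
  have : FiniteDimensional ℚ L := .of_finrank_pos (by rw [hL.deg]; norm_num)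
  have hx₂ : finrank ℚ ℚ⟮x⟯ = 2 := by
    have := finrank_mul_finrank ℚ ℚ⟮x⟯ L
    rw [hx, hL.deg] at this
    omega
  have hxℚ : x ∉ (⊥ : IntermediateField ℚ L) := fun h ↦ by
    rw [← adjoin_simple_eq_bot_iff] at h
    rw [h, IntermediateField.finrank_bot] at hx₂
    omega
  obtain ⟨e, d, hxe⟩ := exists_add_sq_eq_of_natDegree_minpoly_eq_two
    (adjoin.finrank (IsIntegral.of_finite ℚ x) ▸ hx₂)
  have h4 : 4 < finrank ℚ L := by rw [hL.deg]; norm_num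
  have hA : (A : ℚ) ≠ 0 := Int.cast_ne_zero.mpr hL.A_ne_zero
  have hB : (B : ℚ) ≠ 0 := Int.cast_ne_zero.mpr hL.B_ne_zero
  have hC : (C : ℚ) ≠ 0 := Int.cast_ne_zero.mpr hL.C_ne_zero
  have hprim : ∃ α : L, ℚ⟮α⟯ = ⊤ ∧ ∃ f : ℚ[X], f.natDegree = 4 ∧ aeval α f = x := by
    rcases adjoin_union_pair_eq_top {x} hL.hu hL.hv hL.hw hL.gen (by rw [hL.deg, hx₂]; norm_num)
      with h | h | h <;> rw [Set.singleton_union] at h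
    · exact exists_primitive_natDegree_four_aeval_eq h4 hxℚ hxe hL.hv hL.hw hB hC
        (Int.cast_injective.ne hL.B_ne_C) h
    · exact exists_primitive_natDegree_four_aeval_eq h4 hxℚ hxe hL.hu hL.hw hA hC
        (Int.cast_injective.ne hL.A_ne_C) h
    · exact exists_primitive_natDegree_four_aeval_eq h4 hxℚ hxe hL.hu hL.hv hA hB
        (Int.cast_injective.ne hL.A_ne_B) h
  exact ⟨hprim, hx ▸ minDegree_eq_finrank hxℚ (hx ▸ hprim)⟩
end

section
/- Let L = ℚ(√A, √B, √C) be a triquadratic number field, and let u, v, w ∈ L satisfy u² = A, v² = B, w² = C. Set α = v + B·w − C·u·v + u·w (i.e. α = √B + B√C − C√(AB) + √(AC)). Then ℚ(α) = L and there exist rational numbers c₀, c₂, c₄ with c₄ ≠ 0 such that u = c₄·α⁴ + c₂·α² + c₀; in particular deg_α(√A) = 4. -/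
namespace Triquadratic

variable {R : Type*} [CommRing R] {a b c u v w : R}

def alpha (b c u v w : R) : R := v + b * w - c * (u * v) + u * w

lemma alpha_eq_add : alpha b c u v w = (1 - c * u) * v + (b + u) * w := by
  unfold alpha; ring

lemma mul_alpha_eq_add (hv : v ^ 2 = b) (hw : w ^ 2 = c) :
    v * w * alpha b c u v w = c * (b + u) * v + b * (1 - c * u) * w := by
  rw [alpha_eq_add]; linear_combination (1 - c * u) * w * hv + (b + u) * v * hw

lemma alpha_sq_eq (hu : u ^ 2 = a) (hv : v ^ 2 = b) (hw : w ^ 2 = c) :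
    alpha b c u v w ^ 2
      = b + a * b * c ^ 2 + b ^ 2 * c + a * c + 2 * (v * w) * (b - a * c + (1 - b * c) * u) := by
  rw [alpha_eq_add]
  linear_combination (1 - c * u) ^ 2 * hv + (b + u) ^ 2 * hw + (b * c ^ 2 + c - 2 * c * v * w) * hu

lemma mul_u_eq (hu : u ^ 2 = a) (hv : v ^ 2 = b) (hw : w ^ 2 = c) :
    8 * b * c * (b - a * c) * (1 - b * c) * u
      = (alpha b c u v w ^ 2 - (b + a * b * c ^ 2 + b ^ 2 * c + a * c)) ^ 2
        - 4 * b * c * ((b - a * c) ^ 2 + a * (1 - b * c) ^ 2) := by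
  rw [alpha_sq_eq hu hv hw]
  linear_combination (-4) * (b - a * c + (1 - b * c) * u) ^ 2 * (w ^ 2 * hv + b * hw)
    - 4 * b * c * (1 - b * c) ^ 2 * hu

lemma mul_vw_eq (hu : u ^ 2 = a) (hv : v ^ 2 = b) (hw : w ^ 2 = c) :
    2 * (b ^ 2 - a) * (1 - a * c ^ 2) * (v * w)
      = (alpha b c u v w ^ 2 - (b + a * b * c ^ 2 + b ^ 2 * c + a * c))
        * (b - a * c - (1 - b * c) * u) := by
  rw [alpha_sq_eq hu hv hw]
  linear_combination 2 * v * w * (1 - b * c) ^ 2 * hu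

end Triquadratic

lemma Int.eq_one_of_squarefree_of_isSquare {z : ℤ} (hz : Squarefree z) (hsq : IsSquare z) :
    z = 1 := by
  obtain ⟨r, rfl⟩ := hsq
  exact Int.isUnit_mul_self (hz r dvd_rfl)

lemma algebraMap_add_mul_ne_zero {F L : Type*} [Field F] [Field L] [Algebra F L] {a : F}
    (ha : ¬IsSquare a) {u : L} (hu : u ^ 2 = algebraMap F L a) (p : F) {q : F} (hq : q ≠ 0) :
    algebraMap F L p + algebraMap F L q * u ≠ 0 := by
  intro h
  have hu' : u = algebraMap F L (-p / q) := by
    rw [map_div₀, map_neg, eq_div_iff (by simpa using hq)]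
    linear_combination h
  refine ha ⟨-p / q, (algebraMap F L).injective ?_⟩
  rw [← hu, hu', map_mul, sq]

section SubfieldClass

variable {L S : Type*} [Field L] [SetLike S L] [SubfieldClass S L] {K : S}

lemma SubfieldClass.mem_of_mul_mem {d x : L} (hd : d ∈ K) (hd0 : d ≠ 0) (h : d * x ∈ K) :
    x ∈ K := by
  simpa [inv_mul_cancel_left₀ hd0] using mul_mem (inv_mem hd) h

lemma SubfieldClass.mem_of_add_mul_mem {p q r s v w : L} (hp : p ∈ K) (hq : q ∈ K) (hr : r ∈ K)
    (hs : s ∈ K) (hdet : p * s - q * r ≠ 0) (h₁ : p * v + q * w ∈ K)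
    (h₂ : r * v + s * w ∈ K) : v ∈ K ∧ w ∈ K := by
  have hdetK : p * s - q * r ∈ K := sub_mem (mul_mem hp hs) (mul_mem hq hr)
  refine ⟨mem_of_mul_mem hdetK hdet ?_, mem_of_mul_mem hdetK hdet ?_⟩
  · convert sub_mem (mul_mem hs h₁) (mul_mem hq h₂) using 1; ring
  · convert sub_mem (mul_mem hp h₂) (mul_mem hr h₁) using 1; ring

end SubfieldClass

namespace IsTriquadratic

variable {A B C : ℤ} {L : Type*} [Field L] [Algebra ℚ L] {u v w : L}

lemma not_isSquare_A (hL : IsTriquadratic A B C L u v w) : ¬IsSquare (A : ℚ) := by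
  rw [Rat.isSquare_intCast_iff]
  exact fun h ↦ hL.A_ne_one (Int.eq_one_of_squarefree_of_isSquare hL.sqfA h)

lemma B_sq_ne_A (hL : IsTriquadratic A B C L u v w) : B ^ 2 ≠ A := fun h ↦
  hL.A_ne_one (Int.eq_one_of_squarefree_of_isSquare hL.sqfA ⟨B, by rw [← h, sq]⟩)

lemma A_mul_C_sq_ne_one (hL : IsTriquadratic A B C L u v w) : A * C ^ 2 ≠ 1 := by
  intro h
  refine hL.A_ne_one (Int.eq_one_of_squarefree_of_isSquare hL.sqfA ⟨A * C, ?_⟩)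
  linear_combination -A * h

lemma B_ne_A_mul_C (hL : IsTriquadratic A B C L u v w) : B ≠ A * C := by
  intro h
  refine hL.ABC_ne_one (Int.eq_one_of_squarefree_of_isSquare hL.sqfABC ⟨B, ?_⟩)
  rw [h]; ring

lemma B_mul_C_ne_one (hL : IsTriquadratic A B C L u v w) : B * C ≠ 1 := by
  intro h
  rcases Int.eq_one_or_neg_one_of_mul_eq_one' h with ⟨hB, hC⟩ | ⟨hB, hC⟩ <;>
    exact hL.B_ne_C (hB.trans hC.symm)

theorem exists_eq_alpha_pow_four (hL : IsTriquadratic A B C L u v w) :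
    ∃ c₀ c₂ c₄ : ℚ, c₄ ≠ 0 ∧
      u = algebraMap ℚ L c₄ * Triquadratic.alpha (algebraMap ℚ L B) (algebraMap ℚ L C) u v w ^ 4
        + algebraMap ℚ L c₂ * Triquadratic.alpha (algebraMap ℚ L B) (algebraMap ℚ L C) u v w ^ 2
        + algebraMap ℚ L c₀ := by
  set α := Triquadratic.alpha (algebraMap ℚ L B) (algebraMap ℚ L C) u v w
  set D : ℚ := 8 * B * C * (B - A * C) * (1 - B * C)
  set S : ℚ := B + A * B * C ^ 2 + B ^ 2 * C + A * C
  set E : ℚ := 4 * B * C * ((B - A * C) ^ 2 + A * (1 - B * C) ^ 2)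
  have hD : D ≠ 0 := by
    have : (8 * B * C * (B - A * C) * (1 - B * C) : ℤ) ≠ 0 :=
      mul_ne_zero (mul_ne_zero (mul_ne_zero (mul_ne_zero (by norm_num) hL.B_ne_zero) hL.C_ne_zero)
        (sub_ne_zero.mpr hL.B_ne_A_mul_C)) (sub_ne_zero.mpr hL.B_mul_C_ne_one.symm)
    simp only [D]; exact_mod_cast this
  have hDu : algebraMap ℚ L D * u
      = α ^ 4 - algebraMap ℚ L (2 * S) * α ^ 2 + algebraMap ℚ L (S ^ 2 - E) := by
    simp only [D, S, E, map_mul, map_sub, map_add, map_pow, map_one, map_ofNat]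
    linear_combination Triquadratic.mul_u_eq hL.hu hL.hv hL.hw
  refine ⟨(S ^ 2 - E) / D, -2 * S / D, D⁻¹, inv_ne_zero hD, ?_⟩
  have hD' : algebraMap ℚ L D ≠ 0 := (map_ne_zero _).mpr hD
  apply mul_left_cancel₀ hD'
  rw [hDu]
  simp only [map_div₀, map_inv₀, map_mul, map_neg, map_ofNat]
  field_simp
  ring

theorem adjoin_alpha_eq_top (hL : IsTriquadratic A B C L u v w) :
    IntermediateField.adjoin ℚ
      {Triquadratic.alpha (algebraMap ℚ L B) (algebraMap ℚ L C) u v w} = ⊤ := by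
  set b := algebraMap ℚ L B
  set c := algebraMap ℚ L C
  set α := Triquadratic.alpha b c u v w
  set K := IntermediateField.adjoin ℚ {α}
  have hα : α ∈ K := IntermediateField.mem_adjoin_simple_self ℚ α
  have hu : u ∈ K := by
    obtain ⟨c₀, c₂, c₄, -, hu⟩ := hL.exists_eq_alpha_pow_four
    exact hu ▸ add_mem (add_mem (mul_mem (algebraMap_mem K c₄) (pow_mem hα 4))
      (mul_mem (algebraMap_mem K c₂) (pow_mem hα 2))) (algebraMap_mem K c₀)
  have hvw : v * w ∈ K := by
    have hd : algebraMap ℚ L (2 * (B ^ 2 - A) * (1 - A * C ^ 2)) ≠ 0 := by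
      refine (map_ne_zero _).mpr (mul_ne_zero (mul_ne_zero two_ne_zero ?_) ?_)
      · exact_mod_cast sub_ne_zero.mpr hL.B_sq_ne_A
      · exact_mod_cast sub_ne_zero.mpr hL.A_mul_C_sq_ne_one.symm
    simp only [map_mul, map_sub, map_pow, map_one, map_ofNat] at hd
    refine SubfieldClass.mem_of_mul_mem (by aesop) hd ?_
    rw [Triquadratic.mul_vw_eq hL.hu hL.hv hL.hw]
    aesop
  have hdet : (1 - c * u) * (b * (1 - c * u)) - (b + u) * (c * (b + u)) ≠ 0 := by
    have hBC : (-4 * B * C : ℚ) ≠ 0 := by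
      have := hL.B_ne_zero; have := hL.C_ne_zero; positivity
    -- the determinant is `(B + A B C² - B² C - A C) - 4 B C u`
    convert algebraMap_add_mul_ne_zero hL.not_isSquare_A hL.hu
      (B + A * B * C ^ 2 - B ^ 2 * C - A * C) hBC using 1
    simp only [map_mul, map_sub, map_add, map_pow, map_neg, map_ofNat]
    linear_combination (b * c ^ 2 - c) * hL.hu
  have h₁ : (1 - c * u) * v + (b + u) * w ∈ K := by
    rwa [← Triquadratic.alpha_eq_add]
  have h₂ : c * (b + u) * v + b * (1 - c * u) * w ∈ K := by
    rw [← Triquadratic.mul_alpha_eq_add hL.hv hL.hw]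
    exact mul_mem hvw hα
  have hp : 1 - c * u ∈ K := sub_mem (one_mem K) (mul_mem (algebraMap_mem K _) hu)
  have hq : b + u ∈ K := add_mem (algebraMap_mem K _) hu
  obtain ⟨hv, hw⟩ := SubfieldClass.mem_of_add_mul_mem hp hq
    (mul_mem (algebraMap_mem K _) hq) (mul_mem (algebraMap_mem K _) hp) hdet h₁ h₂
  rw [eq_top_iff, ← hL.gen, IntermediateField.adjoin_le_iff]
  rintro x (rfl | rfl | rfl) <;> assumption

end IsTriquadratic

/-- Let `L = ℚ(√A, √B, √C)` be triquadratic with `u = √A`, `v = √B`, `w = √C`, and set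
`α = √B + B√C − C√(AB) + √(AC)`. Then `ℚ(α) = L` and `u = c₄α⁴ + c₂α² + c₀` for some
rationals `c₀, c₂, c₄` with `c₄ ≠ 0`; in particular `deg_α(√A) = 4`. -/
theorem stmt_4 (A B C : ℤ) (L : Type*) [Field L] [Algebra ℚ L] (u v w : L)
    (hL : IsTriquadratic A B C L u v w) :
    IntermediateField.adjoin ℚ
        {v + algebraMap ℚ L (B : ℚ) * w - algebraMap ℚ L (C : ℚ) * (u * v) + u * w} = ⊤ ∧
    ∃ c₀ c₂ c₄ : ℚ, c₄ ≠ 0 ∧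
      u = algebraMap ℚ L c₄ *
            (v + algebraMap ℚ L (B : ℚ) * w - algebraMap ℚ L (C : ℚ) * (u * v) + u * w) ^ 4
          + algebraMap ℚ L c₂ *
            (v + algebraMap ℚ L (B : ℚ) * w - algebraMap ℚ L (C : ℚ) * (u * v) + u * w) ^ 2
          + algebraMap ℚ L c₀ := by
  exact ⟨hL.adjoin_alpha_eq_top, hL.exists_eq_alpha_pow_four⟩
end

section
/- Let B be a square-free nonzero integer. Then there exist no integers p, q satisfying simultaneously B = p⁴ + 2p³q and −B = 2pq³ + q⁴. (Indeed these equations would force 2B = p⁴ + 2p³q − 2pq³ − q⁴ = −(p − q)(p + q)³, which is impossible: the left side is exactly divisible by 2 but not by 8, while the right side is either odd or divisible by 16.) -/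
/-!
Subtracting the two equations gives `2B = (p - q)(p + q)³`. The right side is odd when `p + q` is
odd, and divisible by `2 · 2³ = 16` when `p + q` (hence also `p - q`) is even, while `2B` is even
and, `B` being square-free, not divisible by `8`.
-/

theorem Int.odd_or_sixteen_dvd_sub_mul_add_pow_three (a b : ℤ) :
    Odd ((a - b) * (a + b) ^ 3) ∨ 16 ∣ (a - b) * (a + b) ^ 3 := by
  have hsub : a - b = (a + b) - 2 * b := by ring
  rcases Int.even_or_odd (a + b) with heven | hodd
  · right
    have h2sub : 2 ∣ a - b := hsub ▸ heven.two_dvd.sub (dvd_mul_right 2 b)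
    have h8 : 2 ^ 3 ∣ (a + b) ^ 3 := pow_dvd_pow_of_dvd heven.two_dvd 3
    exact mul_dvd_mul h2sub h8
  · left
    have hodd_sub : Odd (a - b) := hsub ▸ hodd.sub_even (even_two_mul b)
    exact hodd_sub.mul hodd.pow

theorem Int.not_four_dvd_of_squarefree {B : ℤ} (hB : Squarefree B) : ¬ 4 ∣ B := fun h4 =>
  absurd (Int.isUnit_iff.mp (hB 2 h4)) (by norm_num)

theorem stmt_9_general (B : ℤ) (hB : Squarefree B) :
    ¬ ∃ p q : ℤ, B = p ^ 4 + 2 * p ^ 3 * q ∧ -B = 2 * p * q ^ 3 + q ^ 4 := by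
  rintro ⟨p, q, h1, h2⟩
  have key : 2 * B = (p - q) * (p + q) ^ 3 := by linear_combination h1 - h2
  rcases Int.odd_or_sixteen_dvd_sub_mul_add_pow_three p q with hodd | h16
  · rw [← key] at hodd
    exact Int.not_odd_iff_even.mpr (even_two_mul B) hodd
  · exact Int.not_four_dvd_of_squarefree hB (by omega)

/-- If `B` is a square-free nonzero integer, then there are no integers `p, q` with
`B = p⁴ + 2p³q` and `−B = 2pq³ + q⁴`. -/
theorem stmt_9 (B : ℤ) (hB : Squarefree B) (hB0 : B ≠ 0) :
    ¬ ∃ p q : ℤ, B = p ^ 4 + 2 * p ^ 3 * q ∧ -B = 2 * p * q ^ 3 + q ^ 4 :=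
  stmt_9_general B hB
end

section
/- Let A, B be distinct square-free nonzero integers and let a be a nonzero rational number. Then the set of square-free positive integers γ such that the elliptic curve E_γ over ℚ given by Y² = X(X − a²Bγ)(X − (a²B − A)γ) has a rational point of order 3 is finite. -/
/-!
If `P` has order `3` then `2P = -P`, so `x(P)` is a root of the `3`-division polynomial `ψ₃`
of `E_γ`. Scaling `X` by `γ` identifies the roots of `ψ₃` for `E_γ` with `γ` times those for `E_1`,
a fixed nonzero quartic, so `t = x(P)/γ` takes only finitely many values. For each such `t` the
curve equation makes `γ · t(t - a²B)(t - (a²B - A))` a nonzero square, and a nonzero rational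
number is a square times at most one square-free natural number.
-/

/-- The quadratic twist by `γ` of the curve `Y² = X(X − a²B)(X − (a²B − A))`, namely
`Y² = X(X − a²Bγ)(X − (a²B − A)γ)` in Weierstrass form. -/
def curveETwist (A B : ℤ) (a : ℚ) (γ : ℕ) : WeierstrassCurve.Affine ℚ where
  a₁ := 0
  a₂ := -(a ^ 2 * (B : ℚ) * (γ : ℚ) + (a ^ 2 * (B : ℚ) - (A : ℚ)) * (γ : ℚ))
  a₃ := 0
  a₄ := a ^ 2 * (B : ℚ) * (γ : ℚ) * ((a ^ 2 * (B : ℚ) - (A : ℚ)) * (γ : ℚ))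
  a₆ := 0

open Polynomial

theorem Nat.eq_of_squarefree_of_isSquare_mul {m n : ℕ} (hm : Squarefree m) (hn : Squarefree n)
    (h : IsSquare (m * n)) : m = n := by
  obtain ⟨k, hk⟩ := h
  refine Nat.eq_of_factorization_eq hm.ne_zero hn.ne_zero fun p => ?_
  have hmp := hm.natFactorization_le_one p
  have hnp := hn.natFactorization_le_one p
  have heven : Even (m.factorization p + n.factorization p) := by
    rw [← Finsupp.add_apply, ← Nat.factorization_mul hm.ne_zero hn.ne_zero, hk, ← sq,
      Nat.factorization_pow]
    exact ⟨k.factorization p, by simp [two_mul]⟩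
  obtain ⟨r, hr⟩ := heven
  omega

theorem subsingleton_setOf_squarefree_isSquare_mul {r : ℚ} (hr : r ≠ 0) :
    {n : ℕ | Squarefree n ∧ IsSquare ((n : ℚ) * r)}.Subsingleton := by
  rintro m ⟨hm, s, hs⟩ n ⟨hn, u, hu⟩
  refine Nat.eq_of_squarefree_of_isSquare_mul hm hn <|
    Rat.isSquare_natCast_iff.mp ⟨s * u / r, ?_⟩
  field_simp
  push_cast
  linear_combination (n * r) * hs + s * s * hu

namespace WeierstrassCurve.Affine

variable {F : Type*} [Field F] [DecidableEq F] {W : WeierstrassCurve.Affine F}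

theorem Y_ne_negY_of_addOrderOf_eq_three {x y : F} {h : W.Nonsingular x y}
    (hP : addOrderOf (Point.some x y h) = 3) : y ≠ W.negY x y := by
  intro hy
  have h2 : 2 • Point.some x y h = 0 := by rw [two_nsmul]; exact Point.add_self_of_Y_eq hy
  exact absurd (hP ▸ addOrderOf_dvd_of_nsmul_eq_zero h2) (by norm_num)

/-- Clearing the denominator `ψ₂²` of the duplication formula turns `x(2P) - x(P)` into
`-ψ₃(x(P))` modulo the Weierstrass equation. -/
theorem isRoot_Ψ₃_of_addX_eq {x y : F} (h : W.Equation x y) (hy : y ≠ W.negY x y)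
    (hx : W.addX x x (W.slope x x y y) = x) : W.Ψ₃.IsRoot x := by
  have hℓ :
      W.slope x x y y * (y - W.negY x y) = 3 * x ^ 2 + 2 * W.a₂ * x + W.a₄ - W.a₁ * y := by
    rw [W.slope_of_Y_ne rfl hy, div_mul_cancel₀ _ (sub_ne_zero.mpr hy)]
  have he := (W.equation_iff x y).mp h
  simp only [IsRoot, Ψ₃, b₂, b₄, b₆, b₈, eval_add, eval_mul, eval_pow, eval_C, eval_X,
    eval_ofNat]
  simp only [addX, negY] at hx hℓ
  set ℓ := W.slope x x y y
  linear_combination (-(2 * y + W.a₁ * x + W.a₃) ^ 2) * hx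
    + (ℓ * (2 * y + W.a₁ * x + W.a₃) + (3 * x ^ 2 + 2 * W.a₂ * x + W.a₄ - W.a₁ * y)
      + W.a₁ * (2 * y + W.a₁ * x + W.a₃)) * hℓ
    - (W.a₁ ^ 2 + 4 * W.a₂ + 12 * x) * he

theorem isRoot_Ψ₃_of_addOrderOf_eq_three {x y : F} {h : W.Nonsingular x y}
    (hP : addOrderOf (Point.some x y h) = 3) : W.Ψ₃.IsRoot x := by
  have hy := Y_ne_negY_of_addOrderOf_eq_three hP
  have h2P : Point.some x y h + Point.some x y h = -Point.some x y h := by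
    refine eq_neg_of_add_eq_zero_left ?_
    rw [← two_nsmul, ← succ_nsmul, show 2 + 1 = addOrderOf (Point.some x y h) from hP.symm]
    exact addOrderOf_nsmul_eq_zero _
  rw [Point.add_self_of_Y_ne hy, Point.neg_some, Point.some.injEq] at h2P
  exact isRoot_Ψ₃_of_addX_eq h.1 hy h2P.1

end WeierstrassCurve.Affine

open WeierstrassCurve.Affine

def curveERhs (A B : ℤ) (a t : ℚ) : ℚ :=
  t * (t - a ^ 2 * B) * (t - (a ^ 2 * B - A))

theorem eval_Ψ₃_curveETwist_mul (A B : ℤ) (a : ℚ) (γ : ℕ) (t : ℚ) :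
    (curveETwist A B a γ).Ψ₃.eval (γ * t) = γ ^ 4 * (curveETwist A B a 1).Ψ₃.eval t := by
  simp only [WeierstrassCurve.Ψ₃, WeierstrassCurve.b₂, WeierstrassCurve.b₄,
    WeierstrassCurve.b₆, WeierstrassCurve.b₈, curveETwist, eval_add, eval_mul, eval_pow,
    eval_C, eval_X, eval_ofNat, Nat.cast_one]
  ring

theorem exists_isRoot_Ψ₃_isSquare_of_addOrderOf_eq_three {A B : ℤ} {a : ℚ} {γ : ℕ}
    (hγ : γ ≠ 0) {P : (curveETwist A B a γ).Point} (hP : addOrderOf P = 3) :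
    ∃ t : ℚ, (curveETwist A B a 1).Ψ₃.IsRoot t ∧ curveERhs A B a t ≠ 0 ∧
      IsSquare ((γ : ℚ) * curveERhs A B a t) := by
  obtain _ | ⟨x, y, h⟩ := P
  · simp [← Point.zero_def] at hP
  have hγ' : (γ : ℚ) ≠ 0 := Nat.cast_ne_zero.mpr hγ
  have hy : y ≠ -y :=
    (Y_ne_negY_of_addOrderOf_eq_three hP).trans_eq <| by simp [negY, curveETwist]
  have hx := isRoot_Ψ₃_of_addOrderOf_eq_three hP
  have he := (equation_iff x y).mp h.1
  simp only [curveETwist] at he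
  have hsq : (γ : ℚ) * curveERhs A B a (x / γ) = y / γ * (y / γ) := by
    rw [curveERhs]
    field_simp
    linear_combination -he
  refine ⟨x / γ, ?_, fun h0 => ?_, ⟨y / γ, hsq⟩⟩
  · rw [IsRoot, ← mul_right_inj' (pow_ne_zero 4 hγ'), ← eval_Ψ₃_curveETwist_mul,
      mul_div_cancel₀ _ hγ', mul_zero]
    exact hx
  · rw [h0, mul_zero, zero_eq_mul, or_self, div_eq_zero_iff, or_iff_left hγ'] at hsq
    exact hy (by rw [hsq, neg_zero])

theorem stmt_11_general (A B : ℤ) (a : ℚ) :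
    {γ : ℕ | Squarefree γ ∧ 0 < γ ∧
      ∃ P : (curveETwist A B a γ).Point, addOrderOf P = 3}.Finite := by
  have hΨ₃ : (curveETwist A B a 1).Ψ₃ ≠ 0 :=
    ne_zero_of_natDegree_gt ((curveETwist A B a 1).natDegree_Ψ₃_pos three_ne_zero)
  have hroots := (finite_setOfPred_isRoot hΨ₃).sep (curveERhs A B a · ≠ 0)
  refine (hroots.biUnion fun t ht =>
    (subsingleton_setOf_squarefree_isSquare_mul ht.2).finite).subset ?_
  rintro γ ⟨hγ, hγ0, P, hP⟩
  obtain ⟨t, hroot, hne, hsq⟩ := exists_isRoot_Ψ₃_isSquare_of_addOrderOf_eq_three hγ0.ne' hP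
  exact Set.mem_biUnion ⟨hroot, hne⟩ ⟨hγ, hsq⟩

/-- For distinct square-free nonzero integers `A, B` and nonzero rational `a`, the set of
square-free positive integers `γ` such that the twisted curve
`E_γ : Y² = X(X − a²Bγ)(X − (a²B − A)γ)` has a rational point of order `3` is finite. -/
theorem stmt_11 (A B : ℤ) (hA : Squarefree A) (hB : Squarefree B) (hAB : A ≠ B)
    (hA0 : A ≠ 0) (hB0 : B ≠ 0) (a : ℚ) (ha : a ≠ 0) :
    {γ : ℕ | Squarefree γ ∧ 0 < γ ∧
      ∃ P : (curveETwist A B a γ).Point, addOrderOf P = 3}.Finite :=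
  stmt_11_general A B a
end

section
/- Let L = ℚ(√A, √B, √C) be a triquadratic number field and suppose there exist nonzero rational numbers a, b with a² − 1 = (B − A)b². Then min deg_L(√A + a√B) = 2; that is, there exists a primitive element α of L and rationals a₀, a₁, a₂ with a₂ ≠ 0 such that √A + a√B = a₂α² + a₁α + a₀. -/
/-!
Write `γ = √A + a√B`, `P = a + b√B` and `Q = a - b√B`. The hypothesis says `PQ = 1 - Ab²`, so
`β = P + b√A·Q` satisfies `β² = s + tγ` with `s ∈ ℚ` and `t = 2b(1 - Ab²) ≠ 0` (`A` is not a
rational square). Hence `α = β√C` satisfies `α² = C(s + tγ)`, exhibiting `γ` as a quadratic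
polynomial in `α`. Since `A ≠ a²B`, the field `ℚ(γ)` is `ℚ(√A, √B)`, so `ℚ(α)` contains `β` and
then `√C = α/β`: `α` is primitive. Degree at most one is impossible, because `γ` is irrational
and `[ℚ(γ) : ℚ] ≤ 4 < 8`.
-/

open IntermediateField Polynomial

section

variable {K L : Type*} [Field K] [Field L] [Algebra K L]

theorem finrank_adjoin_le_two_of_sq_eq {x : L} {p : K} (hx : x ^ 2 = algebraMap K L p) :
    Module.finrank K K⟮x⟯ ≤ 2 := by
  have hmonic : (X ^ 2 - C p : K[X]).Monic := monic_X_pow_sub_C p two_ne_zero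
  have hroot : aeval x (X ^ 2 - C p : K[X]) = 0 := by simp [hx]
  rw [adjoin.finrank ⟨_, hmonic, hroot⟩]
  calc (minpoly K x).natDegree ≤ (X ^ 2 - C p : K[X]).natDegree :=
        natDegree_le_natDegree (minpoly.min K x hmonic hroot)
    _ = 2 := natDegree_X_pow_sub_C

theorem finrank_le_four_of_adjoin_pair_eq_top {x y : L} {p q : K}
    (hx : x ^ 2 = algebraMap K L p) (hy : y ^ 2 = algebraMap K L q) (htop : K⟮x, y⟯ = ⊤) :
    Module.finrank K L ≤ 4 := by
  have hy' : y ^ 2 = algebraMap K⟮x⟯ L (algebraMap K K⟮x⟯ q) := by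
    rwa [← IsScalarTower.algebraMap_apply]
  have htop' : K⟮x⟯⟮y⟯ = ⊤ := by
    rw [← restrictScalars_eq_top_iff (K := K), adjoin_simple_adjoin_simple, htop]
  have hupper : Module.finrank K⟮x⟯ L ≤ 2 := by
    have := finrank_adjoin_le_two_of_sq_eq hy'
    rwa [htop', finrank_top'] at this
  rw [← Module.finrank_mul_finrank K K⟮x⟯ L]
  exact Nat.mul_le_mul (finrank_adjoin_le_two_of_sq_eq hx) hupper

theorem IntermediateField.mem_of_algebraMap_mul_mem {F : IntermediateField K L} {c : K}
    (hc : c ≠ 0) {z : L} (h : algebraMap K L c * z ∈ F) : z ∈ F := by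
  have := mul_mem (F.algebraMap_mem c⁻¹) h
  rwa [← mul_assoc, ← map_mul, inv_mul_cancel₀ hc, map_one, one_mul] at this

theorem IntermediateField.mem_of_add_algebraMap_mul_mem {F : IntermediateField K L}
    {x y : L} {p q c : K} (hx : x ^ 2 = algebraMap K L p) (hy : y ^ 2 = algebraMap K L q)
    (h2 : (2 : K) ≠ 0) (hc : c ≠ 0) (hpq : p - c ^ 2 * q ≠ 0) (h : x + algebraMap K L c * y ∈ F) :
    x ∈ F ∧ y ∈ F := by
  set γ := x + algebraMap K L c * y
  have hxy : x * y ∈ F := by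
    refine F.mem_of_algebraMap_mul_mem (mul_ne_zero h2 hc) ?_
    have : algebraMap K L (2 * c) * (x * y) = γ ^ 2 - algebraMap K L (p + c ^ 2 * q) := by
      simp only [map_mul, map_add, map_pow, map_ofNat, γ]
      linear_combination -hx - algebraMap K L c ^ 2 * hy
    rw [this]
    exact sub_mem (pow_mem h 2) (F.algebraMap_mem _)
  -- `γ = x + c y` and `γ * (x * y) = c q x + p y` form a linear system of determinant `p - c² q`
  have hx' : x ∈ F := by
    refine F.mem_of_algebraMap_mul_mem hpq ?_
    have : algebraMap K L (p - c ^ 2 * q) * x =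
        algebraMap K L p * γ - algebraMap K L c * (γ * (x * y)) := by
      simp only [map_mul, map_sub, map_pow, γ]
      linear_combination algebraMap K L c * y * hx + algebraMap K L c ^ 2 * x * hy
    rw [this]
    exact sub_mem (mul_mem (F.algebraMap_mem p) h) (mul_mem (F.algebraMap_mem c) (mul_mem h hxy))
  refine ⟨hx', F.mem_of_algebraMap_mul_mem hc ?_⟩
  rw [show algebraMap K L c * y = γ - x by ring]
  exact sub_mem h hx'

theorem two_le_natDegree_of_aeval_eq {α z : L} (hα : K⟮α⟯ = ⊤) (hz : K⟮z⟯ ≠ ⊤)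
    (hz' : z ∉ (⊥ : IntermediateField K L)) {f : K[X]} (hf : aeval α f = z) :
    2 ≤ f.natDegree := by
  by_contra! hdeg
  rw [eq_X_add_C_of_natDegree_le_one (Nat.le_of_lt_succ hdeg)] at hf
  simp only [map_add, map_mul, aeval_C, aeval_X] at hf
  by_cases h1 : f.coeff 1 = 0
  · rw [h1, map_zero, zero_mul, zero_add] at hf
    exact hz' (hf ▸ IntermediateField.algebraMap_mem _ _)
  · refine hz (eq_top_iff.mpr (hα ▸ adjoin_simple_le_iff.mpr ?_))
    refine mem_of_algebraMap_mul_mem h1 ?_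
    rw [show algebraMap K L (f.coeff 1) * α = z - algebraMap K L (f.coeff 0) by rw [← hf]; ring]
    exact sub_mem (mem_adjoin_simple_self K z) (IntermediateField.algebraMap_mem _ _)

end

theorem minDegree_eq_two {L : Type*} [Field L] [Algebra ℚ L] {α z : L} (hα : ℚ⟮α⟯ = ⊤)
    {f : ℚ[X]} (hf2 : f.natDegree = 2) (hf : aeval α f = z) (hz : ℚ⟮z⟯ ≠ ⊤)
    (hz' : z ∉ (⊥ : IntermediateField ℚ L)) : minDegree L z = 2 := by
  have hmem : 2 ∈ {d : ℕ | ∃ α : L, ℚ⟮α⟯ = ⊤ ∧ ∃ f : ℚ[X], f.natDegree = d ∧ aeval α f = z} :=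
    ⟨α, hα, f, hf2, hf⟩
  refine le_antisymm (Nat.sInf_le hmem) (le_csInf ⟨2, hmem⟩ ?_)
  rintro d ⟨β, hβ, g, rfl, hg⟩
  exact two_le_natDegree_of_aeval_eq hβ hz hz' hg

theorem Squarefree.eq_one_of_intCast_eq_sq {A : ℤ} (hA : Squarefree A) {r : ℚ}
    (h : (A : ℚ) = r ^ 2) : A = 1 := by
  obtain ⟨m, rfl⟩ : IsSquare A := Rat.isSquare_intCast_iff.mp ⟨r, by rw [h, sq]⟩
  rcases Int.isUnit_iff.mp (hA m dvd_rfl) with rfl | rfl <;> rfl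

theorem intCast_sub_sq_mul_ne_zero {A B : ℤ} (hA : Squarefree A) (hB : Squarefree B)
    (hAB : A ≠ B) {a b : ℚ} (hab : a ^ 2 - 1 = ((B : ℚ) - A) * b ^ 2) :
    (A : ℚ) - a ^ 2 * B ≠ 0 := by
  intro h
  have hfact : (a ^ 2 - 1) * (1 + B * b ^ 2) = 0 := by linear_combination hab - b ^ 2 * h
  rcases mul_eq_zero.mp hfact with ha | hb
  · exact hAB (by exact_mod_cast (show (A : ℚ) = B by linear_combination h + (B : ℚ) * ha))
  · have hb0 : b ≠ 0 := by rintro rfl; simp at hb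
    have hB : -B = 1 := (Associated.refl B).neg_right.squarefree_iff.mp hB
      |>.eq_one_of_intCast_eq_sq (r := b⁻¹) (by push_cast; field_simp; linear_combination -hb)
    obtain rfl : B = -1 := by omega
    have hA : -A = 1 := (Associated.refl A).neg_right.squarefree_iff.mp hA
      |>.eq_one_of_intCast_eq_sq (r := a) (by push_cast at h ⊢; linear_combination -h)
    omega

theorem sq_add_mul_mul_sub_eq {R : Type*} [CommRing R] {u v A B a b : R} (hu : u ^ 2 = A)
    (hv : v ^ 2 = B) (hab : a ^ 2 - 1 = (B - A) * b ^ 2) :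
    (a + b * v + b * u * (a - b * v)) ^ 2 =
      (a ^ 2 + b ^ 2 * B) * (1 + b ^ 2 * A) + 2 * b * (1 - b ^ 2 * A) * (u + a * v) := by
  linear_combination b ^ 2 * (a - b * v) ^ 2 * hu + (b ^ 2 - 2 * b ^ 3 * u + b ^ 4 * A) * hv
    + 2 * b * u * hab

namespace IsTriquadratic

variable {A B C : ℤ} {L : Type*} [Field L] [Algebra ℚ L] {u v w : L}

theorem add_algebraMap_mul_notMem_bot (hL : IsTriquadratic A B C L u v w) {a : ℚ}
    (ha : a ≠ 0) (hAB : (A : ℚ) - a ^ 2 * B ≠ 0) :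
    u + algebraMap ℚ L a * v ∉ (⊥ : IntermediateField ℚ L) := by
  intro h
  obtain ⟨r, hr⟩ := mem_bot.mp (mem_of_add_algebraMap_mul_mem hL.hu hL.hv two_ne_zero ha hAB h).1
  refine hL.A_ne_one (hL.sqfA.eq_one_of_intCast_eq_sq (r := r) ?_)
  apply (algebraMap ℚ L).injective
  rw [map_pow, hr, hL.hu]

theorem adjoin_add_algebraMap_mul_ne_top (hL : IsTriquadratic A B C L u v w) (a : ℚ) :
    ℚ⟮u + algebraMap ℚ L a * v⟯ ≠ ⊤ := by
  intro h
  have huv : ℚ⟮u, v⟯ = ⊤ := eq_top_iff.mpr <| h ▸ adjoin_simple_le_iff.mpr <|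
    add_mem (subset_adjoin _ _ (by simp))
      (mul_mem (IntermediateField.algebraMap_mem _ _) (subset_adjoin _ _ (by simp)))
  have := finrank_le_four_of_adjoin_pair_eq_top hL.hu hL.hv huv
  rw [hL.deg] at this
  omega

theorem exists_adjoin_eq_top_and_eq_quadratic (hL : IsTriquadratic A B C L u v w) {a b : ℚ}
    (ha : a ≠ 0) (hb : b ≠ 0) (hab : a ^ 2 - 1 = ((B : ℚ) - A) * b ^ 2)
    (hAB : (A : ℚ) - a ^ 2 * B ≠ 0) :
    ∃ α : L, ℚ⟮α⟯ = ⊤ ∧ ∃ a₀ a₂ : ℚ, a₂ ≠ 0 ∧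
      u + algebraMap ℚ L a * v = algebraMap ℚ L a₂ * α ^ 2 + algebraMap ℚ L a₀ := by
  set γ := u + algebraMap ℚ L a * v
  set s : ℚ := (a ^ 2 + b ^ 2 * B) * (1 + b ^ 2 * A)
  set t : ℚ := 2 * b * (1 - b ^ 2 * A)
  set β : L := algebraMap ℚ L a + algebraMap ℚ L b * v +
    algebraMap ℚ L b * u * (algebraMap ℚ L a - algebraMap ℚ L b * v)
  have hβ : β ^ 2 = algebraMap ℚ L s + algebraMap ℚ L t * γ := by
    have hab' := congrArg (algebraMap ℚ L) hab
    simp only [map_sub, map_mul, map_pow, map_one] at hab'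
    simp only [β, γ, s, t, map_mul, map_add, map_sub, map_pow, map_one, map_ofNat]
    exact sq_add_mul_mul_sub_eq hL.hu hL.hv hab'
  have ht : t ≠ 0 := mul_ne_zero (mul_ne_zero two_ne_zero hb) fun h ↦
    hL.A_ne_one (hL.sqfA.eq_one_of_intCast_eq_sq (r := b⁻¹) (by field_simp; linear_combination -h))
  have hCt : (C : ℚ) * t ≠ 0 := mul_ne_zero (by exact_mod_cast hL.C_ne_zero) ht
  have hα : algebraMap ℚ L (C * t) * γ = (β * w) ^ 2 - algebraMap ℚ L (C * s) := by
    rw [mul_pow, hβ, hL.hw]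
    simp only [map_mul]
    ring
  have hβ0 : β ≠ 0 := by
    intro h
    refine hL.add_algebraMap_mul_notMem_bot ha hAB (mem_of_algebraMap_mul_mem hCt ?_)
    rw [hα, h, zero_mul, zero_pow two_ne_zero, zero_sub]
    exact neg_mem (IntermediateField.algebraMap_mem _ _)
  refine ⟨β * w, ?_, -(s / t), (C * t)⁻¹, inv_ne_zero hCt, ?_⟩
  · set F := ℚ⟮β * w⟯
    have hγ : γ ∈ F := mem_of_algebraMap_mul_mem hCt <| hα ▸
      sub_mem (pow_mem (mem_adjoin_simple_self ℚ _) 2) (F.algebraMap_mem _)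
    obtain ⟨hu, hv⟩ := mem_of_add_algebraMap_mul_mem hL.hu hL.hv two_ne_zero ha hAB hγ
    have hβF : β ∈ F := add_mem (add_mem (F.algebraMap_mem a) (mul_mem (F.algebraMap_mem b) hv))
      (mul_mem (mul_mem (F.algebraMap_mem b) hu)
        (sub_mem (F.algebraMap_mem a) (mul_mem (F.algebraMap_mem b) hv)))
    have hw : w ∈ F := by
      simpa [hβ0] using mul_mem (inv_mem hβF) (mem_adjoin_simple_self ℚ (β * w))
    rw [eq_top_iff, ← hL.gen, adjoin_le_iff]
    simp [Set.insert_subset_iff, hu, hv, hw]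
  · have hCt' : algebraMap ℚ L (C * t) ≠ 0 := (_root_.map_ne_zero _).mpr hCt
    refine mul_left_cancel₀ hCt' ?_
    rw [hα, mul_add, map_inv₀, mul_inv_cancel_left₀ hCt', ← map_mul, sub_eq_add_neg, ← map_neg]
    congr 2
    field_simp

end IsTriquadratic

/-- If `L = ℚ(√A, √B, √C)` is triquadratic and there are nonzero rationals `a, b` with
`a² − 1 = (B − A)b²`, then `min deg_L(√A + a√B) = 2`: there is a primitive element `α`
of `L` and rationals `a₀, a₁, a₂` with `a₂ ≠ 0` and `√A + a√B = a₂α² + a₁α + a₀`. -/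
theorem stmt_12 (A B C : ℤ) (L : Type*) [Field L] [Algebra ℚ L] (u v w : L)
    (hL : IsTriquadratic A B C L u v w) (a b : ℚ) (ha : a ≠ 0) (hb : b ≠ 0)
    (hab : a ^ 2 - 1 = ((B : ℚ) - (A : ℚ)) * b ^ 2) :
    minDegree L (u + algebraMap ℚ L a * v) = 2 ∧
    ∃ α : L, IntermediateField.adjoin ℚ {α} = ⊤ ∧
      ∃ a₀ a₁ a₂ : ℚ, a₂ ≠ 0 ∧
        u + algebraMap ℚ L a * v =
          algebraMap ℚ L a₂ * α ^ 2 + algebraMap ℚ L a₁ * α + algebraMap ℚ L a₀ := by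
  have hAB := intCast_sub_sq_mul_ne_zero hL.sqfA hL.sqfB hL.A_ne_B hab
  obtain ⟨α, hα, a₀, a₂, ha₂, hrep⟩ := hL.exists_adjoin_eq_top_and_eq_quadratic ha hb hab hAB
  set f : ℚ[X] := Polynomial.C a₂ * X ^ 2 + Polynomial.C a₀
  have hdeg : f.natDegree = 2 := by rw [natDegree_add_C, natDegree_C_mul_X_pow 2 a₂ ha₂]
  have heval : aeval α f = u + algebraMap ℚ L a * v := by
    rw [hrep, map_add, map_mul, aeval_C, aeval_C, aeval_X_pow]
  refine ⟨minDegree_eq_two hα hdeg heval (hL.adjoin_add_algebraMap_mul_ne_top a)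
    (hL.add_algebraMap_mul_notMem_bot ha hAB), α, hα, a₀, 0, a₂, ha₂, ?_⟩
  rw [hrep, map_zero, zero_mul, add_zero]
end

section
/- Let A, B be integers and let a, b be nonzero rational numbers satisfying a² − 1 = (B − A)b². Then the pair (X, Y) = ((a²/b²)(Bb² + 1), (a²/b³)(Bb² + 1)) satisfies Y² = X(X − a²B)(X − (a²B − A)). Moreover, if Bb² + 1 ≠ 0 then Y ≠ 0, so this is a rational point of the curve that is not a 2-torsion point. -/
/-! Write `c = Bb² + 1` and `X = a²c/b²`. The hypothesis says `Ab² = c − a²`, so both shifted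
factors of the cubic collapse: `X − a²B = a²/b²` and `X − (a²B − A) = c/b²`. The right-hand side
is therefore `a²c/b² · a²/b² · c/b² = (a²c/b³)²`. -/

theorem sq_eq_cubic_of_sq_sub_one_eq {K : Type*} [Field K] {A B a b : K} (hb : b ≠ 0)
    (h : a ^ 2 - 1 = (B - A) * b ^ 2) :
    (a ^ 2 / b ^ 3 * (B * b ^ 2 + 1)) ^ 2 =
      (a ^ 2 / b ^ 2 * (B * b ^ 2 + 1)) *
        (a ^ 2 / b ^ 2 * (B * b ^ 2 + 1) - a ^ 2 * B) *
        (a ^ 2 / b ^ 2 * (B * b ^ 2 + 1) - (a ^ 2 * B - A)) := by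
  have hfirst : a ^ 2 / b ^ 2 * (B * b ^ 2 + 1) - a ^ 2 * B = a ^ 2 / b ^ 2 := by
    field_simp
    ring
  have hsecond : a ^ 2 / b ^ 2 * (B * b ^ 2 + 1) - (a ^ 2 * B - A) = (B * b ^ 2 + 1) / b ^ 2 := by
    field_simp
    linear_combination h
  rw [hfirst, hsecond]
  ring

/-- If `a² − 1 = (B − A)b²` with `a, b ≠ 0`, then
`(X, Y) = ((a²/b²)(Bb² + 1), (a²/b³)(Bb² + 1))` lies on the curve
`Y² = X(X − a²B)(X − (a²B − A))`; moreover if `Bb² + 1 ≠ 0` then `Y ≠ 0`,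
so this point is not a 2-torsion point. -/
theorem stmt_13 (A B : ℤ) (a b : ℚ) (ha : a ≠ 0) (hb : b ≠ 0)
    (h : a ^ 2 - 1 = ((B : ℚ) - (A : ℚ)) * b ^ 2) :
    (a ^ 2 / b ^ 3 * ((B : ℚ) * b ^ 2 + 1)) ^ 2 =
      (a ^ 2 / b ^ 2 * ((B : ℚ) * b ^ 2 + 1)) *
        (a ^ 2 / b ^ 2 * ((B : ℚ) * b ^ 2 + 1) - a ^ 2 * (B : ℚ)) *
        (a ^ 2 / b ^ 2 * ((B : ℚ) * b ^ 2 + 1) - (a ^ 2 * (B : ℚ) - (A : ℚ))) ∧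
    ((B : ℚ) * b ^ 2 + 1 ≠ 0 → a ^ 2 / b ^ 3 * ((B : ℚ) * b ^ 2 + 1) ≠ 0) :=
  ⟨sq_eq_cubic_of_sq_sub_one_eq hb h,
    mul_ne_zero (div_ne_zero (pow_ne_zero 2 ha) (pow_ne_zero 3 hb))⟩
end

section
/- Let A, B be integers and let a, b be nonzero rational numbers satisfying a² − 1 = (B − A)b². Then the pair (X, Y) = ((B − A)a², −A(B − A)a²b) satisfies Y² = X(X − a²B)(X − (a²B − A)). Moreover, if A ≠ 0 and B ≠ A then Y ≠ 0, so this is a rational point of the curve that is not a 2-torsion point. -/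
/-- With `X = (B - A)a²` the three factors of the cubic are `(B - A)a²`, `-Aa²` and
`-A(a² - 1) = -A(B - A)b²`, whose product is the square of `A(B - A)a²b`. -/
theorem neg_sq_eq_cubic_of_sq_sub_one {R : Type*} [CommRing R] {A B a b : R}
    (h : a ^ 2 - 1 = (B - A) * b ^ 2) :
    (-(A * (B - A) * a ^ 2 * b)) ^ 2 =
      ((B - A) * a ^ 2) * ((B - A) * a ^ 2 - a ^ 2 * B) *
        ((B - A) * a ^ 2 - (a ^ 2 * B - A)) := by
  linear_combination (-A ^ 2 * a ^ 4 * (B - A)) * h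

theorem neg_mul_sub_mul_sq_mul_ne_zero {R : Type*} [CommRing R] [NoZeroDivisors R]
    {A B a b : R} (hA : A ≠ 0) (hBA : B ≠ A) (ha : a ≠ 0) (hb : b ≠ 0) :
    -(A * (B - A) * a ^ 2 * b) ≠ 0 :=
  neg_ne_zero.mpr <| mul_ne_zero (mul_ne_zero (mul_ne_zero hA (sub_ne_zero.mpr hBA))
    (pow_ne_zero 2 ha)) hb

/-- If `a² − 1 = (B − A)b²` with `a, b ≠ 0`, then
`(X, Y) = ((B − A)a², −A(B − A)a²b)` lies on the curve
`Y² = X(X − a²B)(X − (a²B − A))`; moreover if `A ≠ 0` and `B ≠ A` then `Y ≠ 0`,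
so this point is not a 2-torsion point. -/
theorem stmt_14 (A B : ℤ) (a b : ℚ) (ha : a ≠ 0) (hb : b ≠ 0)
    (h : a ^ 2 - 1 = ((B : ℚ) - (A : ℚ)) * b ^ 2) :
    (-((A : ℚ) * ((B : ℚ) - (A : ℚ)) * a ^ 2 * b)) ^ 2 =
      (((B : ℚ) - (A : ℚ)) * a ^ 2) *
        (((B : ℚ) - (A : ℚ)) * a ^ 2 - a ^ 2 * (B : ℚ)) *
        (((B : ℚ) - (A : ℚ)) * a ^ 2 - (a ^ 2 * (B : ℚ) - (A : ℚ))) ∧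
    (A ≠ 0 → B ≠ A → -((A : ℚ) * ((B : ℚ) - (A : ℚ)) * a ^ 2 * b) ≠ 0) :=
  ⟨neg_sq_eq_cubic_of_sq_sub_one h, fun hA hBA =>
    neg_mul_sub_mul_sq_mul_ne_zero (Int.cast_ne_zero.mpr hA)
      (Int.cast_injective.ne hBA) ha hb⟩
end

section
/- Let A, B be distinct square-free nonzero integers and let a be a nonzero rational number. Suppose (X, Y) ∈ ℚ² satisfies Y² = X(X − a²B)(X − (a²B − A)) with Y ≠ 0. Then there exist nonzero rational numbers y, z satisfying aB·y·z² − a·y = A·z² − y². (Explicitly, y = AX/(aB(X − (a²B − A))) and z = Y/(aB(X − (a²B − A))), which are well defined and nonzero since Y ≠ 0 forces X ∉ {0, a²B, a²B − A}.) -/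
/-!
Since `Y ≠ 0`, all three factors of the cubic are nonzero, so `d = aB(X − (a²B − A))` is
nonzero. After multiplying by `d³` and replacing `Y²` by the cubic, both sides of the relation
become `aABX(X − (a²B − A))(X² − 2a²BX + a²B(a²B − A))`.
-/

theorem factors_ne_zero_of_sq_eq_mul_mul {M : Type*} [MonoidWithZero M] [NoZeroDivisors M]
    {u v w Y : M} (hY : Y ≠ 0) (hE : Y ^ 2 = u * v * w) : u ≠ 0 ∧ v ≠ 0 ∧ w ≠ 0 := by
  have huvw : u * v * w ≠ 0 := hE ▸ pow_ne_zero 2 hY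
  obtain ⟨huv, hw⟩ := mul_ne_zero_iff.mp huvw
  obtain ⟨hu, hv⟩ := mul_ne_zero_iff.mp huv
  exact ⟨hu, hv, hw⟩

theorem mul_mul_sq_sub_eq_of_sq_eq {K : Type*} [Field K] {a A B X Y d : K}
    (hd : d = a * B * (X - (a ^ 2 * B - A))) (ha : a ≠ 0) (hB : B ≠ 0)
    (hX : X - (a ^ 2 * B - A) ≠ 0)
    (hE : Y ^ 2 = X * (X - a ^ 2 * B) * (X - (a ^ 2 * B - A))) :
    a * B * (A * X / d) * (Y / d) ^ 2 - a * (A * X / d) = A * (Y / d) ^ 2 - (A * X / d) ^ 2 := by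
  subst hd
  field_simp
  linear_combination A * (a ^ 2 * B - A) * hE

theorem stmt_16_general (A B : ℤ)
    (hA0 : A ≠ 0) (hB0 : B ≠ 0) (a : ℚ) (ha : a ≠ 0) (X Y : ℚ) (hY : Y ≠ 0)
    (hE : Y ^ 2 = X * (X - a ^ 2 * (B : ℚ)) * (X - (a ^ 2 * (B : ℚ) - (A : ℚ)))) :
    (X ≠ 0 ∧ X ≠ a ^ 2 * (B : ℚ) ∧ X ≠ a ^ 2 * (B : ℚ) - (A : ℚ)) ∧
    ∃ y z : ℚ, y ≠ 0 ∧ z ≠ 0 ∧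
      y = (A : ℚ) * X / (a * (B : ℚ) * (X - (a ^ 2 * (B : ℚ) - (A : ℚ)))) ∧
      z = Y / (a * (B : ℚ) * (X - (a ^ 2 * (B : ℚ) - (A : ℚ)))) ∧
      a * (B : ℚ) * y * z ^ 2 - a * y = (A : ℚ) * z ^ 2 - y ^ 2 := by
  obtain ⟨hX, hXB, hXC⟩ := factors_ne_zero_of_sq_eq_mul_mul hY hE
  have hBQ : (B : ℚ) ≠ 0 := Int.cast_ne_zero.mpr hB0
  have hAQ : (A : ℚ) ≠ 0 := Int.cast_ne_zero.mpr hA0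
  have hd : a * (B : ℚ) * (X - (a ^ 2 * (B : ℚ) - (A : ℚ))) ≠ 0 :=
    mul_ne_zero (mul_ne_zero ha hBQ) hXC
  exact ⟨⟨hX, sub_ne_zero.mp hXB, sub_ne_zero.mp hXC⟩, _, _,
    div_ne_zero (mul_ne_zero hAQ hX) hd, div_ne_zero hY hd, rfl, rfl,
    mul_mul_sq_sub_eq_of_sq_eq rfl ha hBQ hXC hE⟩

/-- Let `A, B` be distinct square-free nonzero integers, `a` a nonzero rational, and
`(X, Y) ∈ ℚ²` a point on `Y² = X(X − a²B)(X − (a²B − A))` with `Y ≠ 0`. Then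
`X ∉ {0, a²B, a²B − A}`, and the explicit nonzero rationals
`y = AX/(aB(X − (a²B − A)))` and `z = Y/(aB(X − (a²B − A)))` satisfy
`aB·y·z² − a·y = A·z² − y²`. -/
theorem stmt_16 (A B : ℤ) (hA : Squarefree A) (hB : Squarefree B) (hAB : A ≠ B)
    (hA0 : A ≠ 0) (hB0 : B ≠ 0) (a : ℚ) (ha : a ≠ 0) (X Y : ℚ) (hY : Y ≠ 0)
    (hE : Y ^ 2 = X * (X - a ^ 2 * (B : ℚ)) * (X - (a ^ 2 * (B : ℚ) - (A : ℚ)))) :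
    (X ≠ 0 ∧ X ≠ a ^ 2 * (B : ℚ) ∧ X ≠ a ^ 2 * (B : ℚ) - (A : ℚ)) ∧
    ∃ y z : ℚ, y ≠ 0 ∧ z ≠ 0 ∧
      y = (A : ℚ) * X / (a * (B : ℚ) * (X - (a ^ 2 * (B : ℚ) - (A : ℚ)))) ∧
      z = Y / (a * (B : ℚ) * (X - (a ^ 2 * (B : ℚ) - (A : ℚ)))) ∧
      a * (B : ℚ) * y * z ^ 2 - a * y = (A : ℚ) * z ^ 2 - y ^ 2 :=
  stmt_16_general A B hA0 hB0 a ha X Y hY hE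
end

section
/- Let L = ℚ(√A, √B, √C) be a triquadratic number field, let a be a nonzero rational number, and suppose α is a primitive element of L for which there exist rationals a₀, a₁, a₂ with a₂ ≠ 0 and √A + a√B = a₂α² + a₁α + a₀. Write α = b₀ + b₁√A + b₂√B + b₃√C + b₄√(AB) + b₅√(AC) + b₆√(BC) + b₇√(ABC) with all bᵢ ∈ ℚ. Then b₁ = b₂ = b₄ = 0, i.e. α lies in the ℚ-span of {1, √C, √(AC), √(BC), √(ABC)}, and moreover b₅ ≠ 0. -/
section AdjoinSquareRoots

variable {R S : Type*} [CommRing R] [CommRing S] [Algebra R S] {x : S} {r : R}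

open Submodule
open scoped Algebra

theorem Algebra.toSubmodule_adjoin_singleton_of_sq_eq (hx : x ^ 2 = algebraMap R S r) :
    Subalgebra.toSubmodule (R[x]) = span R {1, x} := by
  have hmul : span R {1, x} * span R {1, x} ≤ span R {1, x} := by
    rw [span_mul_span, span_le]
    rintro _ ⟨a, rfl | rfl, b, rfl | rfl, rfl⟩
    · simpa using subset_span (by simp)
    · simpa using subset_span (by simp)
    · simpa using subset_span (by simp)
    · change b * b ∈ _
      rw [← sq, hx, Algebra.algebraMap_eq_smul_one]
      exact smul_mem _ _ (subset_span (by simp))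
  let T : Subalgebra R S := (span R {1, x}).toSubalgebra (subset_span (by simp))
    fun _ _ ha hb => hmul (mul_mem_mul ha hb)
  refine le_antisymm (Algebra.adjoin_le (S := T) ?_) (span_le.2 ?_)
  · simpa [T] using subset_span (by simp)
  · rintro _ (rfl | rfl)
    · exact (R[x]).one_mem
    · exact Algebra.subset_adjoin rfl

theorem Algebra.toSubmodule_adjoin_insert_of_sq_eq (hx : x ^ 2 = algebraMap R S r) (s : Set S) :
    Subalgebra.toSubmodule (Algebra.adjoin R (insert x s)) =
      span R {1, x} * Subalgebra.toSubmodule (Algebra.adjoin R s) := by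
  rw [Set.insert_eq, Algebra.adjoin_union, ← Subalgebra.mul_toSubmodule,
    toSubmodule_adjoin_singleton_of_sq_eq hx]

theorem Algebra.linearCombination_mem_adjoin_pair (x y : S) (c₀ c₁ c₂ c₃ : R) :
    algebraMap R S c₀ + algebraMap R S c₁ * x + algebraMap R S c₂ * y +
      algebraMap R S c₃ * (x * y) ∈ R[x, y] := by
  have hx : x ∈ R[x, y] := Algebra.subset_adjoin (by simp)
  have hy : y ∈ R[x, y] := Algebra.subset_adjoin (by simp)
  exact add_mem (add_mem (add_mem (Subalgebra.algebraMap_mem _ _)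
    (mul_mem (Subalgebra.algebraMap_mem _ _) hx)) (mul_mem (Subalgebra.algebraMap_mem _ _) hy))
    (mul_mem (Subalgebra.algebraMap_mem _ _) (mul_mem hx hy))

theorem Algebra.toSubmodule_adjoin_pair_le_of_sq_eq {y : S} {r' : R}
    (hx : x ^ 2 = algebraMap R S r) (hy : y ^ 2 = algebraMap R S r') :
    Subalgebra.toSubmodule (R[x, y]) ≤ span R (Set.range ![1, x, y, x * y]) := by
  rw [toSubmodule_adjoin_insert_of_sq_eq hx, toSubmodule_adjoin_singleton_of_sq_eq hy,
    span_mul_span]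
  refine span_mono ?_
  rintro _ ⟨a, rfl | rfl, b, rfl | rfl, rfl⟩ <;> simp

end AdjoinSquareRoots

namespace IsTriquadratic

variable {A B C : ℤ} {L : Type*} [Field L] [Algebra ℚ L] {u v w : L}

open Submodule
open scoped Algebra

theorem finiteDimensional (hL : IsTriquadratic A B C L u v w) : FiniteDimensional ℚ L :=
  Module.finite_of_finrank_pos (by rw [hL.deg]; norm_num)

theorem algebra_adjoin_eq_top (hL : IsTriquadratic A B C L u v w) :
    ℚ[u, v, w] = ⊤ := by
  have := hL.finiteDimensional
  rw [← IntermediateField.adjoin_toSubalgebra, hL.gen, IntermediateField.top_toSubalgebra]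

theorem sup_map_mulLeft_eq_top (hL : IsTriquadratic A B C L u v w) :
    Subalgebra.toSubmodule ℚ[u, v] ⊔
      (Subalgebra.toSubmodule ℚ[u, v]).map (LinearMap.mulLeft ℚ w) = ⊤ := by
  have hwuv : ({u, v, w} : Set L) = insert w {u, v} := by
    ext; simp only [Set.mem_insert_iff, Set.mem_singleton_iff]; tauto
  rw [eq_top_iff, ← Algebra.top_toSubmodule, ← hL.algebra_adjoin_eq_top, hwuv,
    Algebra.toSubmodule_adjoin_insert_of_sq_eq hL.hw, mul_le]
  intro m hm n hn
  obtain ⟨c, d, rfl⟩ := mem_span_pair.1 hm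
  rw [add_mul, smul_mul_assoc, smul_mul_assoc, one_mul]
  exact add_mem (mem_sup_left (smul_mem _ _ hn))
    (mem_sup_right (smul_mem _ _ (mem_map_of_mem hn)))

theorem finrank_adjoin_pair_le_four (hL : IsTriquadratic A B C L u v w) :
    Module.finrank ℚ (Subalgebra.toSubmodule ℚ[u, v]) ≤ 4 := by
  have := hL.finiteDimensional
  calc Module.finrank ℚ (Subalgebra.toSubmodule ℚ[u, v])
      ≤ Module.finrank ℚ (span ℚ (Set.range ![1, u, v, u * v])) :=
        Submodule.finrank_mono (Algebra.toSubmodule_adjoin_pair_le_of_sq_eq hL.hu hL.hv)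
    _ ≤ 4 := (finrank_range_le_card _).trans (by simp)

theorem eight_add_finrank_inf_le (hL : IsTriquadratic A B C L u v w) :
    8 + Module.finrank ℚ (Subalgebra.toSubmodule ℚ[u, v] ⊓
      (Subalgebra.toSubmodule ℚ[u, v]).map (LinearMap.mulLeft ℚ w) : Submodule ℚ L)
      ≤ 2 * Module.finrank ℚ (Subalgebra.toSubmodule ℚ[u, v]) := by
  have := hL.finiteDimensional
  have hsum := Submodule.finrank_sup_add_finrank_inf_eq (Subalgebra.toSubmodule ℚ[u, v])
    ((Subalgebra.toSubmodule ℚ[u, v]).map (LinearMap.mulLeft ℚ w))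
  rw [hL.sup_map_mulLeft_eq_top, finrank_top, hL.deg] at hsum
  have := Submodule.finrank_map_le (LinearMap.mulLeft ℚ w) (Subalgebra.toSubmodule ℚ[u, v])
  omega

theorem finrank_adjoin_pair (hL : IsTriquadratic A B C L u v w) :
    Module.finrank ℚ (Subalgebra.toSubmodule ℚ[u, v]) = 4 := by
  have := hL.eight_add_finrank_inf_le
  have := hL.finrank_adjoin_pair_le_four
  omega

theorem inf_map_mulLeft_eq_bot (hL : IsTriquadratic A B C L u v w) :
    Subalgebra.toSubmodule ℚ[u, v] ⊓
      (Subalgebra.toSubmodule ℚ[u, v]).map (LinearMap.mulLeft ℚ w) = ⊥ := by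
  have := hL.finiteDimensional
  have := hL.eight_add_finrank_inf_le
  rw [hL.finrank_adjoin_pair] at this
  exact Submodule.finrank_eq_zero.1 (by omega)

theorem linearIndependent (hL : IsTriquadratic A B C L u v w) :
    LinearIndependent ℚ ![1, u, v, u * v] := by
  have := hL.finiteDimensional
  rw [linearIndependent_iff_card_eq_finrank_span, Set.finrank]
  refine le_antisymm ?_ ((finrank_range_le_card _).trans (by simp))
  exact hL.finrank_adjoin_pair.symm.trans_le
    (Submodule.finrank_mono (Algebra.toSubmodule_adjoin_pair_le_of_sq_eq hL.hu hL.hv))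

theorem eq_zero_of_linearCombination_eq_zero (hL : IsTriquadratic A B C L u v w)
    {c₀ c₁ c₂ c₃ : ℚ} (h : algebraMap ℚ L c₀ + algebraMap ℚ L c₁ * u + algebraMap ℚ L c₂ * v +
      algebraMap ℚ L c₃ * (u * v) = 0) :
    c₀ = 0 ∧ c₁ = 0 ∧ c₂ = 0 ∧ c₃ = 0 := by
  have hc := Fintype.linearIndependent_iff.1 hL.linearIndependent ![c₀, c₁, c₂, c₃]
    (by simpa [Fin.sum_univ_four, Algebra.smul_def] using h)
  exact ⟨hc 0, hc 1, hc 2, hc 3⟩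

theorem eq_zero_of_linearCombination_eq_algebraMap (hL : IsTriquadratic A B C L u v w)
    {c₀ c₁ c₂ c₃ q : ℚ} (h : algebraMap ℚ L c₀ + algebraMap ℚ L c₁ * u + algebraMap ℚ L c₂ * v +
      algebraMap ℚ L c₃ * (u * v) = algebraMap ℚ L q) :
    c₁ = 0 ∧ c₂ = 0 ∧ c₃ = 0 :=
  (hL.eq_zero_of_linearCombination_eq_zero (c₀ := c₀ - q)
    (by rw [map_sub]; linear_combination h)).2

theorem eq_zero_of_add_mul_eq_zero (hL : IsTriquadratic A B C L u v w) {p q : L}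
    (hp : p ∈ ℚ[u, v]) (hq : q ∈ ℚ[u, v]) (h : p + w * q = 0) : p = 0 ∧ q = 0 := by
  have hp' : p ∈ Subalgebra.toSubmodule ℚ[u, v] ⊓
      (Subalgebra.toSubmodule ℚ[u, v]).map (LinearMap.mulLeft ℚ w) := by
    refine ⟨hp, ?_⟩
    rw [eq_neg_of_add_eq_zero_left h, ← mul_neg]
    exact mem_map_of_mem (neg_mem hq)
  rw [hL.inf_map_mulLeft_eq_bot, mem_bot] at hp'
  have hw : w ≠ 0 := by
    rintro rfl
    have hC : algebraMap ℚ L (C : ℚ) = algebraMap ℚ L 0 := by rw [← hL.hw, map_zero]; ring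
    exact hL.C_ne_zero (by exact_mod_cast (algebraMap ℚ L).injective hC)
  subst hp'
  exact ⟨rfl, by simpa [hw] using h⟩

theorem eq_and_mul_eq_zero_of_eq_quadratic (hL : IsTriquadratic A B C L u v w) {t y z : L}
    (ht : t ∈ ℚ[u, v]) (hy : y ∈ ℚ[u, v]) (hz : z ∈ ℚ[u, v]) {a₀ a₁ a₂ : ℚ}
    (h : t = algebraMap ℚ L a₂ * (y + w * z) ^ 2 + algebraMap ℚ L a₁ * (y + w * z) +
      algebraMap ℚ L a₀) :
    t = algebraMap ℚ L a₂ * (y ^ 2 + algebraMap ℚ L C * z ^ 2) + algebraMap ℚ L a₁ * y +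
        algebraMap ℚ L a₀ ∧
      z * (2 * algebraMap ℚ L a₂ * y + algebraMap ℚ L a₁) = 0 := by
  obtain ⟨hp, hq⟩ := hL.eq_zero_of_add_mul_eq_zero
    (p := algebraMap ℚ L a₂ * (y ^ 2 + algebraMap ℚ L C * z ^ 2) + algebraMap ℚ L a₁ * y +
      algebraMap ℚ L a₀ - t) (q := z * (2 * algebraMap ℚ L a₂ * y + algebraMap ℚ L a₁))
    (sub_mem (add_mem (add_mem (mul_mem (Subalgebra.algebraMap_mem _ _)
      (add_mem (pow_mem hy 2) (mul_mem (Subalgebra.algebraMap_mem _ _) (pow_mem hz 2))))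
      (mul_mem (Subalgebra.algebraMap_mem _ _) hy)) (Subalgebra.algebraMap_mem _ _)) ht)
    (mul_mem hz (add_mem (mul_mem (mul_mem (ofNat_mem _ 2) (Subalgebra.algebraMap_mem _ _)) hy)
      (Subalgebra.algebraMap_mem _ _)))
    (by linear_combination -h - algebraMap ℚ L a₂ * z ^ 2 * hL.hw)
  exact ⟨(sub_eq_zero.1 hp).symm, hq⟩

theorem adjoin_simple_ne_top_of_mem (hL : IsTriquadratic A B C L u v w) {α : L}
    (hα : α ∈ ℚ[u, v]) : IntermediateField.adjoin ℚ {α} ≠ ⊤ := by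
  intro htop
  have := hL.finiteDimensional
  have hw : w ∈ ℚ[u, v] := by
    refine Algebra.adjoin_singleton_le hα ?_
    rw [← IntermediateField.adjoin_toSubalgebra, htop]
    trivial
  have := (hL.eq_zero_of_add_mul_eq_zero hw (neg_mem (one_mem _)) (by ring)).2
  exact one_ne_zero (neg_eq_zero.1 this)

theorem add_mul_ne_mul_sq_add (hL : IsTriquadratic A B C L u v w) {a : ℚ} (ha : a ≠ 0)
    (r s c₀ c₁ c₂ : ℚ) :
    u + algebraMap ℚ L a * v ≠ algebraMap ℚ L r *
      (algebraMap ℚ L c₀ + algebraMap ℚ L c₁ * v + algebraMap ℚ L c₂ * (u * v)) ^ 2 +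
        algebraMap ℚ L s := by
  intro h
  have := Algebra.charZero_of_charZero ℚ L
  have hu := hL.hu
  have hv := hL.hv
  simp only [eq_ratCast, Rat.cast_intCast] at hu hv h
  obtain ⟨-, hcu, hcv, hcuv⟩ := hL.eq_zero_of_linearCombination_eq_zero
    (c₀ := s + r * (c₀ ^ 2 + B * c₁ ^ 2 + A * B * c₂ ^ 2)) (c₁ := 2 * r * B * c₁ * c₂ - 1)
    (c₂ := 2 * r * c₀ * c₁ - a) (c₃ := 2 * r * c₀ * c₂)
    (by
      simp only [eq_ratCast]
      push_cast
      linear_combination -h - r * ((c₁ ^ 2 + c₂ ^ 2 * A + 2 * c₁ * c₂ * u) * hv +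
        c₂ ^ 2 * v ^ 2 * hu))
  rcases (show r = 0 ∨ c₀ = 0 ∨ c₂ = 0 by simpa [or_assoc] using hcuv) with hr | hc₀ | hc₂
  · simp [hr] at hcu
  · exact ha (by simpa [hc₀] using hcv)
  · simp [hc₂] at hcu

end IsTriquadratic

/-- Let `L = ℚ(√A, √B, √C)` be triquadratic, `a ≠ 0` rational, and `α` a primitive
element of `L` with `√A + a√B = a₂α² + a₁α + a₀` for some rationals `a₀, a₁, a₂`,
`a₂ ≠ 0`. Writing `α = b₀ + b₁√A + b₂√B + b₃√C + b₄√(AB) + b₅√(AC) + b₆√(BC) + b₇√(ABC)`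
with all `bᵢ ∈ ℚ`, one has `b₁ = b₂ = b₄ = 0` and `b₅ ≠ 0`. -/
theorem stmt_17 (A B C : ℤ) (L : Type*) [Field L] [Algebra ℚ L] (u v w : L)
    (hL : IsTriquadratic A B C L u v w) (a : ℚ) (ha : a ≠ 0)
    (α : L) (hα : IntermediateField.adjoin ℚ {α} = ⊤)
    (b₀ b₁ b₂ b₃ b₄ b₅ b₆ b₇ : ℚ)
    (hrep : α = algebraMap ℚ L b₀ + algebraMap ℚ L b₁ * u + algebraMap ℚ L b₂ * v +
        algebraMap ℚ L b₃ * w + algebraMap ℚ L b₄ * (u * v) + algebraMap ℚ L b₅ * (u * w) +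
        algebraMap ℚ L b₆ * (v * w) + algebraMap ℚ L b₇ * (u * v * w))
    (a₀ a₁ a₂ : ℚ) (ha₂ : a₂ ≠ 0)
    (heq : u + algebraMap ℚ L a * v =
        algebraMap ℚ L a₂ * α ^ 2 + algebraMap ℚ L a₁ * α + algebraMap ℚ L a₀) :
    b₁ = 0 ∧ b₂ = 0 ∧ b₄ = 0 ∧ b₅ ≠ 0 := by
  set Y := algebraMap ℚ L b₀ + algebraMap ℚ L b₁ * u + algebraMap ℚ L b₂ * v +
    algebraMap ℚ L b₄ * (u * v)
  set Z := algebraMap ℚ L b₃ + algebraMap ℚ L b₅ * u + algebraMap ℚ L b₆ * v +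
    algebraMap ℚ L b₇ * (u * v)
  have hY := Algebra.linearCombination_mem_adjoin_pair u v b₀ b₁ b₂ b₄
  have hαYZ : α = Y + w * Z := by rw [hrep]; ring
  rw [hαYZ] at heq
  obtain ⟨hK, hcross⟩ := hL.eq_and_mul_eq_zero_of_eq_quadratic
    (by simpa using Algebra.linearCombination_mem_adjoin_pair u v 0 1 a 0) hY
    (Algebra.linearCombination_mem_adjoin_pair u v b₃ b₅ b₆ b₇) heq
  have hZ : Z ≠ 0 := fun hZ ↦
    hL.adjoin_simple_ne_top_of_mem (by rwa [hαYZ, hZ, mul_zero, add_zero]) hα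
  have hYrat : Y = algebraMap ℚ L (-a₁ / (2 * a₂)) := by
    rw [map_div₀, map_neg, eq_div_iff ((map_ne_zero _).2 (mul_ne_zero two_ne_zero ha₂)),
      map_mul, map_ofNat]
    linear_combination (mul_eq_zero.1 hcross).resolve_left hZ
  obtain ⟨hb₁, hb₂, hb₄⟩ := hL.eq_zero_of_linearCombination_eq_algebraMap hYrat
  refine ⟨hb₁, hb₂, hb₄, fun hb₅ ↦ hL.add_mul_ne_mul_sq_add ha (a₂ * C)
    (a₂ * b₀ ^ 2 + a₁ * b₀ + a₀) b₃ b₆ b₇ ?_⟩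
  rw [hK]
  simp only [hb₁, hb₂, hb₄, hb₅, map_add, map_mul, map_pow, map_zero]
  ring
end

section
/- Let A, B, C be distinct square-free nonzero integers and a a nonzero rational number, and let γ be a square-free positive integer with gcd(γ, 2AB) = 1 such that L_γ = ℚ(√(γA), √(γB), √C) is a triquadratic number field. If every rational point P of the elliptic curve E_γ : Y² = X(X − a²Bγ)(X − (a²B − A)γ) satisfies 2P = O (i.e. E_γ(ℚ) consists only of 2-torsion points, equivalently E_γ has rank 0 and torsion subgroup ℤ/2ℤ × ℤ/2ℤ), then min deg_{L_γ}(√(γA) + a√(γB)) > 2 = [L_γ : ℚ(√(γA) + a√(γB))]. -/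
open IntermediateField hiding algebraMap_mem
open Module

namespace IntermediateField

variable {K L : Type*} [Field K] [Field L] [Algebra K L] {s : Set L} {w : L}

theorem exists_add_mul_of_mem_adjoin_insert [Algebra.IsAlgebraic K L]
    (hw : w ^ 2 ∈ adjoin K s) {z : L} (hz : z ∈ adjoin K (insert w s)) :
    ∃ x ∈ adjoin K s, ∃ y ∈ adjoin K s, z = x + y * w := by
  rw [← mem_toSubalgebra,
    adjoin_toSubalgebra_of_isAlgebraic fun x _ => Algebra.IsAlgebraic.isAlgebraic x] at hz
  induction hz using Algebra.adjoin_induction with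
  | mem t ht =>
    rcases ht with rfl | ht
    · exact ⟨0, zero_mem _, 1, one_mem _, by ring⟩
    · exact ⟨t, subset_adjoin K s ht, 0, zero_mem _, by ring⟩
  | algebraMap r => exact ⟨algebraMap K L r, algebraMap_mem _ r, 0, zero_mem _, by ring⟩
  | add z z' _ _ hz hz' =>
    obtain ⟨x, hx, y, hy, rfl⟩ := hz
    obtain ⟨x', hx', y', hy', rfl⟩ := hz'
    exact ⟨x + x', add_mem hx hx', y + y', add_mem hy hy', by ring⟩
  | mul z z' _ _ hz hz' =>
    obtain ⟨x, hx, y, hy, rfl⟩ := hz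
    obtain ⟨x', hx', y', hy', rfl⟩ := hz'
    refine ⟨x * x' + y * y' * w ^ 2, ?_, x * y' + y * x', ?_, by ring⟩
    · exact add_mem (mul_mem hx hx') (mul_mem (mul_mem hy hy') hw)
    · exact add_mem (mul_mem hx hy') (mul_mem hy hx')

theorem eq_and_eq_of_add_mul_eq {E : IntermediateField K L} (hw : w ∉ E) {x y x' y' : L}
    (hx : x ∈ E) (hy : y ∈ E) (hx' : x' ∈ E) (hy' : y' ∈ E) (h : x + y * w = x' + y' * w) :
    x = x' ∧ y = y' := by
  obtain rfl : y = y' := by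
    by_contra hne
    refine hw ?_
    have hw' : w = (x' - x) / (y - y') := by
      field_simp [sub_ne_zero.mpr hne]; linear_combination h
    rw [hw']
    exact div_mem (sub_mem hx' hx) (sub_mem hy hy')
  exact ⟨add_right_cancel h, rfl⟩

theorem finrank_adjoin_insert_le [FiniteDimensional K L] (hw : w ^ 2 ∈ adjoin K s) :
    finrank K (adjoin K (insert w s)) ≤ 2 * finrank K (adjoin K s) := by
  set S := (adjoin K s).toSubalgebra.toSubmodule
  have hle : (adjoin K (insert w s)).toSubalgebra.toSubmodule ≤
      S ⊔ S.map (LinearMap.mulRight K w) := by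
    intro z hz
    obtain ⟨x, hx, y, hy, rfl⟩ := exists_add_mul_of_mem_adjoin_insert hw hz
    exact Submodule.add_mem_sup hx ⟨y, hy, rfl⟩
  calc finrank K (adjoin K (insert w s))
      ≤ finrank K ↥(S ⊔ S.map (LinearMap.mulRight K w)) := Submodule.finrank_mono hle
    _ ≤ finrank K S + finrank K (S.map (LinearMap.mulRight K w)) :=
      Submodule.finrank_add_le_finrank_add_finrank _ _
    _ ≤ finrank K S + finrank K S := by gcongr; exact Submodule.finrank_map_le _ _
    _ = 2 * finrank K (adjoin K s) := by rw [two_mul]; rfl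

theorem adjoin_insert_eq_of_mem {t : L} (ht : t ∈ adjoin K s) :
    adjoin K (insert t s) = adjoin K s := by
  rw [← adjoin_insert_adjoin, Set.insert_eq_of_mem ht, adjoin_self]

end IntermediateField

section Quadratic

variable {F L : Type*} [Field F] [Field L] [Algebra F L] {u v w α : L} {p q c : F}

theorem ne_zero_of_notMem_bot (hv : v ^ 2 = algebraMap F L q)
    (hv₀ : v ∉ (⊥ : IntermediateField F L)) : q ≠ 0 := by
  rintro rfl
  rw [map_zero, pow_eq_zero_iff two_ne_zero] at hv
  exact hv₀ (hv ▸ zero_mem _)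

theorem exists_algebraMap_add_mul_of_mem_adjoin_simple [Algebra.IsAlgebraic F L]
    (hv : v ^ 2 = algebraMap F L q) {z : L} (hz : z ∈ F⟮v⟯) :
    ∃ x y : F, z = algebraMap F L x + algebraMap F L y * v := by
  rw [← insert_empty_eq] at hz
  obtain ⟨x, hx, y, hy, rfl⟩ :=
    exists_add_mul_of_mem_adjoin_insert (by rw [hv, adjoin_empty]; exact algebraMap_mem _ q) hz
  rw [adjoin_empty, mem_bot] at hx hy
  obtain ⟨x, rfl⟩ := hx
  obtain ⟨y, rfl⟩ := hy
  exact ⟨x, y, rfl⟩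

theorem eq_and_eq_of_algebraMap_add_mul_eq (hv : v ∉ (⊥ : IntermediateField F L)) {x y x' y' : F}
    (h : algebraMap F L x + algebraMap F L y * v = algebraMap F L x' + algebraMap F L y' * v) :
    x = x' ∧ y = y' := by
  obtain ⟨hx, hy⟩ := eq_and_eq_of_add_mul_eq hv (algebraMap_mem _ x) (algebraMap_mem _ y)
    (algebraMap_mem _ x') (algebraMap_mem _ y') h
  exact ⟨(algebraMap F L).injective hx, (algebraMap F L).injective hy⟩

theorem ne_sq_mul_of_notMem_adjoin (hu : u ^ 2 = algebraMap F L p)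
    (hv : v ^ 2 = algebraMap F L q) (hu₀ : u ∉ F⟮v⟯) (a : F) : p ≠ a ^ 2 * q := by
  intro h
  rw [h, map_mul, map_pow] at hu
  have hprod : (u - algebraMap F L a * v) * (u + algebraMap F L a * v) = 0 := by
    linear_combination hu - algebraMap F L a ^ 2 * hv
  have hav : algebraMap F L a * v ∈ F⟮v⟯ :=
    mul_mem (algebraMap_mem _ a) (mem_adjoin_simple_self F v)
  rcases mul_eq_zero.mp hprod with h' | h'
  · exact hu₀ (by rwa [sub_eq_zero.mp h'])
  · exact hu₀ (by rw [eq_neg_of_add_eq_zero_left h']; exact neg_mem hav)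

theorem adjoin_simple_add_mul_eq (hu : u ^ 2 = algebraMap F L p)
    (hv : v ^ 2 = algebraMap F L q) {a : F} (h2a : 2 * a ≠ 0) (hpq : p ≠ a ^ 2 * q) :
    F⟮u + algebraMap F L a * v⟯ = F⟮u, v⟯ := by
  set θ := u + algebraMap F L a * v
  have hu' : u ∈ F⟮u, v⟯ := subset_adjoin F _ (Set.mem_insert u {v})
  have hv' : v ∈ F⟮u, v⟯ := subset_adjoin F _ (Set.mem_insert_of_mem u rfl)
  refine le_antisymm (adjoin_simple_le_iff.mpr (add_mem hu' (mul_mem (algebraMap_mem _ a) hv')))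
    (adjoin_le_iff.mpr ?_)
  have hθ : θ ∈ F⟮θ⟯ := mem_adjoin_simple_self F θ
  have huv : u * v ∈ F⟮θ⟯ := by
    have : u * v = algebraMap F L (2 * a)⁻¹ * (θ ^ 2 - algebraMap F L (p + a ^ 2 * q)) := by
      rw [map_inv₀, eq_inv_mul_iff_mul_eq₀ ((map_ne_zero _).mpr h2a)]
      simp only [θ, map_add, map_mul, map_pow, map_ofNat]
      linear_combination -hu - algebraMap F L a ^ 2 * hv
    rw [this]
    exact mul_mem (algebraMap_mem _ _) (sub_mem (pow_mem hθ 2) (algebraMap_mem _ _))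
  have hu'' : u ∈ F⟮θ⟯ := by
    have : u = algebraMap F L (p - a ^ 2 * q)⁻¹ *
        (algebraMap F L p * θ - algebraMap F L a * (u * v) * θ) := by
      rw [map_inv₀, eq_inv_mul_iff_mul_eq₀ ((map_ne_zero _).mpr (sub_ne_zero.mpr hpq))]
      simp only [θ, map_sub, map_mul, map_pow]
      linear_combination (algebraMap F L a * v) * hu + algebraMap F L a ^ 2 * u * hv
    rw [this]
    exact mul_mem (algebraMap_mem _ _) (sub_mem (mul_mem (algebraMap_mem _ _) hθ)
      (mul_mem (mul_mem (algebraMap_mem _ _) huv) hθ))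
  have hv'' : v ∈ F⟮θ⟯ := by
    have : v = algebraMap F L a⁻¹ * (θ - u) := by
      rw [map_inv₀, eq_inv_mul_iff_mul_eq₀ ((map_ne_zero _).mpr (right_ne_zero_of_mul h2a))]
      ring
    rw [this]
    exact mul_mem (algebraMap_mem _ _) (sub_mem hθ hu'')
  rintro x (rfl | rfl)
  exacts [hu'', hv'']

theorem exists_coeffs_of_mul_sq_eq [Algebra.IsAlgebraic F L] (hu : u ^ 2 = algebraMap F L p)
    (hv : v ^ 2 = algebraMap F L q) (hv₀ : v ∉ (⊥ : IntermediateField F L)) (hu₀ : u ∉ F⟮v⟯)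
    {k c a r : F} {y : L} (hy : y ∈ F⟮u, v⟯) (h : algebraMap F L k * y ^ 2 =
      algebraMap F L c * (u + algebraMap F L a * v) + algebraMap F L r) :
    ∃ x₀ x₁ x₂ x₃ : F, 2 * k * (x₀ * x₂ + q * x₁ * x₃) = c ∧
      2 * k * (x₀ * x₁ + p * x₂ * x₃) = c * a ∧ 2 * k * (x₀ * x₃ + x₁ * x₂) = 0 := by
  -- `x₀, x₁, x₂, x₃` are the coordinates of `y = (x₀ + x₁ v) + (x₂ + x₃ v) u`.
  obtain ⟨P, hP, Q, hQ, rfl⟩ :=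
    exists_add_mul_of_mem_adjoin_insert (by rw [hu]; exact algebraMap_mem _ p) hy
  obtain ⟨hPQ₀, hPQ₁⟩ := eq_and_eq_of_add_mul_eq hu₀
    (x := algebraMap F L k * (P ^ 2 + algebraMap F L p * Q ^ 2))
    (y := algebraMap F L (2 * k) * (P * Q))
    (x' := algebraMap F L r + algebraMap F L (c * a) * v) (y' := algebraMap F L c)
    (mul_mem (algebraMap_mem _ k) (add_mem (pow_mem hP 2) (mul_mem (algebraMap_mem _ p)
      (pow_mem hQ 2))))
    (mul_mem (algebraMap_mem _ _) (mul_mem hP hQ))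
    (add_mem (algebraMap_mem _ r) (mul_mem (algebraMap_mem _ _) (mem_adjoin_simple_self F v)))
    (algebraMap_mem _ c)
    (by simp only [map_mul, map_ofNat]; linear_combination h - algebraMap F L k * Q ^ 2 * hu)
  obtain ⟨x₀, x₁, rfl⟩ := exists_algebraMap_add_mul_of_mem_adjoin_simple hv hP
  obtain ⟨x₂, x₃, rfl⟩ := exists_algebraMap_add_mul_of_mem_adjoin_simple hv hQ
  obtain ⟨h₁, h₃⟩ := eq_and_eq_of_algebraMap_add_mul_eq hv₀
    (x := 2 * k * (x₀ * x₂ + q * x₁ * x₃)) (y := 2 * k * (x₀ * x₃ + x₁ * x₂)) (x' := c) (y' := 0)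
    (by simp only [map_mul, map_add, map_ofNat, map_zero] at hPQ₁ ⊢
        linear_combination
          hPQ₁ - 2 * algebraMap F L k * algebraMap F L x₁ * algebraMap F L x₃ * hv)
  obtain ⟨-, h₂⟩ := eq_and_eq_of_algebraMap_add_mul_eq hv₀
    (x := k * (x₀ ^ 2 + q * x₁ ^ 2 + p * (x₂ ^ 2 + q * x₃ ^ 2)))
    (y := 2 * k * (x₀ * x₁ + p * x₂ * x₃)) (x' := r) (y' := c * a)
    (by simp only [map_mul, map_add, map_ofNat, map_pow] at hPQ₀ ⊢
        linear_combination hPQ₀ - algebraMap F L k * (algebraMap F L x₁ ^ 2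
          + algebraMap F L p * algebraMap F L x₃ ^ 2) * hv)
  exact ⟨x₀, x₁, x₂, x₃, h₁, h₂, h₃⟩

theorem triquadratic_tower [FiniteDimensional F L] (hu : u ^ 2 = algebraMap F L p)
    (hv : v ^ 2 = algebraMap F L q) (hw : w ^ 2 = algebraMap F L c)
    (hgen : F⟮u, v, w⟯ = ⊤) (hdim : finrank F L = 8) :
    v ∉ (⊥ : IntermediateField F L) ∧ u ∉ F⟮v⟯ ∧ w ∉ F⟮u, v⟯ ∧ finrank F F⟮u, v⟯ = 4 := by
  have h₁ : finrank F F⟮v⟯ ≤ 2 := by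
    have := finrank_adjoin_insert_le (K := F) (s := ∅) (w := v)
      (by rw [hv, adjoin_empty]; exact algebraMap_mem _ q)
    rwa [insert_empty_eq, adjoin_empty, IntermediateField.finrank_bot] at this
  have h₂ : finrank F F⟮u, v⟯ ≤ 2 * finrank F F⟮v⟯ :=
    finrank_adjoin_insert_le (by rw [hu]; exact algebraMap_mem _ p)
  have htop : adjoin F (insert w {u, v}) = ⊤ := by rw [Set.insert_comm, Set.pair_comm, hgen]
  have h₃ : finrank F L ≤ 2 * finrank F F⟮u, v⟯ := by
    have := finrank_adjoin_insert_le (K := F) (s := {u, v}) (w := w)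
      (by rw [hw]; exact algebraMap_mem _ c)
    rwa [htop, finrank_top'] at this
  refine ⟨fun hv₀ => ?_, fun hu₀ => ?_, fun hw₀ => ?_, by omega⟩
  · rw [← adjoin_simple_eq_bot_iff] at hv₀
    rw [hv₀, IntermediateField.finrank_bot] at h₂
    omega
  · rw [adjoin_insert_eq_of_mem hu₀] at h₃
    omega
  · rw [adjoin_insert_eq_of_mem hw₀] at htop
    rw [htop, finrank_top'] at h₂
    omega

theorem adjoin_simple_algebraMap_mul_add {a : F} (ha : a ≠ 0) (b : F) :
    F⟮algebraMap F L a * α + algebraMap F L b⟯ = F⟮α⟯ := by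
  refine le_antisymm (adjoin_simple_le_iff.mpr (add_mem (mul_mem (algebraMap_mem _ a)
    (mem_adjoin_simple_self F α)) (algebraMap_mem _ b))) (adjoin_simple_le_iff.mpr ?_)
  set z := algebraMap F L a * α + algebraMap F L b
  have hz : algebraMap F L a⁻¹ * (z - algebraMap F L b) ∈ F⟮z⟯ :=
    mul_mem (algebraMap_mem _ _) (sub_mem (mem_adjoin_simple_self F z) (algebraMap_mem _ b))
  rwa [add_sub_cancel_right, ← mul_assoc, ← map_mul, inv_mul_cancel₀ ha, map_one, one_mul] at hz

theorem adjoin_simple_aeval_eq_bot_or_top (hα : F⟮α⟯ = ⊤) {f : Polynomial F}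
    (hf : f.natDegree ≤ 1) : F⟮Polynomial.aeval α f⟯ = ⊥ ∨ F⟮Polynomial.aeval α f⟯ = ⊤ := by
  obtain ⟨a, b, rfl⟩ := Polynomial.exists_eq_X_add_C_of_natDegree_le_one hf
  simp only [map_add, map_mul, Polynomial.aeval_C, Polynomial.aeval_X]
  by_cases ha : a = 0
  · left
    rw [ha, map_zero, zero_mul, zero_add, adjoin_simple_eq_bot_iff]
    exact algebraMap_mem _ b
  · exact .inr (hα ▸ adjoin_simple_algebraMap_mul_add ha b)

theorem exists_adjoin_simple_eq_top_sq_eq (h2 : (2 : F) ≠ 0) (hα : F⟮α⟯ = ⊤)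
    {f : Polynomial F} (hf : f.natDegree = 2) :
    ∃ β : L, F⟮β⟯ = ⊤ ∧ ∃ c : F, c ≠ 0 ∧ ∃ r : F,
      β ^ 2 = algebraMap F L c * Polynomial.aeval α f + algebraMap F L r := by
  have hf₂ : f.coeff 2 ≠ 0 := by
    rw [← hf]
    exact Polynomial.leadingCoeff_ne_zero.mpr
      (Polynomial.ne_zero_of_natDegree_gt (n := 0) (by omega))
  refine ⟨algebraMap F L (2 * f.coeff 2) * α + algebraMap F L (f.coeff 1),
    hα ▸ adjoin_simple_algebraMap_mul_add (mul_ne_zero h2 hf₂) _, 4 * f.coeff 2,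
    mul_ne_zero (by simpa [show (4 : F) = 2 * 2 by norm_num] using h2) hf₂,
    f.coeff 1 ^ 2 - 4 * f.coeff 2 * f.coeff 0, ?_⟩
  rw [Polynomial.aeval_eq_sum_range, hf]
  simp only [Finset.sum_range_succ, Finset.sum_range_zero, Algebra.smul_def, map_mul, map_sub,
    map_pow, map_ofNat]
  ring

theorem lt_minDegree [Algebra ℚ L] [FiniteDimensional ℚ L] {z : L} {n : ℕ}
    (h : ∀ α : L, ℚ⟮α⟯ = ⊤ → ∀ f : Polynomial ℚ, Polynomial.aeval α f = z → n < f.natDegree) :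
    n < minDegree L z := by
  obtain ⟨α, hα⟩ := Field.exists_primitive_element ℚ L
  have hz : z ∈ Algebra.adjoin ℚ {α} := by
    rw [← adjoin_simple_toSubalgebra_of_isAlgebraic (Algebra.IsAlgebraic.isAlgebraic α), hα]
    trivial
  rw [Algebra.adjoin_singleton_eq_range_aeval] at hz
  obtain ⟨f, hf⟩ := hz
  rw [minDegree, Nat.lt_iff_add_one_le]
  apply le_csInf
  · exact ⟨f.natDegree, α, hα, f, rfl, hf⟩
  rintro d ⟨β, hβ, g, rfl, hgz⟩
  exact h β hβ g hgz

end Quadratic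

theorem exists_relation_of_coeffs {K : Type*} [Field K] {p q a c k x₀ x₁ x₂ x₃ : K}
    (ha : a ≠ 0) (hc : c ≠ 0) (h₁ : k * (x₀ * x₂ + q * x₁ * x₃) = c)
    (h₂ : k * (x₀ * x₁ + p * x₂ * x₃) = c * a) (h₃ : k * (x₀ * x₃ + x₁ * x₂) = 0) :
    ∃ m n : K, m ≠ 0 ∧ n * (1 - p * m ^ 2) = a * m * (1 - q * n ^ 2) := by
  have hk : k ≠ 0 := by rintro rfl; exact hc (by linear_combination -h₁)
  have h₃' : x₀ * x₃ + x₁ * x₂ = 0 := (mul_eq_zero.mp h₃).resolve_left hk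
  have hx₀ : x₀ ≠ 0 := by
    rintro rfl
    have hx₁ : x₁ ≠ 0 := by rintro rfl; exact hc (by linear_combination -h₁)
    obtain rfl : x₂ = 0 := by simpa [hx₁] using h₃'
    exact mul_ne_zero hc ha (by linear_combination -h₂)
  have hx₂ : x₂ ≠ 0 := by
    rintro rfl
    obtain rfl : x₃ = 0 := by simpa [hx₀] using h₃'
    exact hc (by linear_combination -h₁)
  refine ⟨x₂ / x₀, x₁ / x₀, div_ne_zero hx₂ hx₀, ?_⟩
  have h : x₀ * x₁ + p * x₂ * x₃ = a * (x₀ * x₂ + q * x₁ * x₃) :=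
    mul_left_cancel₀ hk (by linear_combination h₂ - a * h₁)
  field_simp
  linear_combination x₀ * h - (p * x₂ - a * q * x₁) * h₃'

theorem WeierstrassCurve.Affine.exists_two_smul_ne_zero {F : Type*} [Field F] [DecidableEq F]
    {W : WeierstrassCurve.Affine F} {x y : F} (h : W.Equation x y) (hy : y ≠ W.negY x y) :
    ∃ P : W.Point, 2 • P ≠ 0 := by
  have hns : W.Nonsingular x y := (W.nonsingular_iff x y).2 ⟨h, Or.inr hy⟩
  refine ⟨.some x y hns, ?_⟩
  rw [two_smul, WeierstrassCurve.Affine.Point.add_self_of_Y_ne hy]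
  exact WeierstrassCurve.Affine.Point.some_ne_zero _

theorem curveETwist_exists_two_smul_ne_zero {A B : ℤ} {a : ℚ} {γ : ℕ} (ha : a ≠ 0)
    (hB : (γ : ℚ) * B ≠ 0) (hAB : (γ : ℚ) * A ≠ a ^ 2 * ((γ : ℚ) * B)) {m n : ℚ} (hm : m ≠ 0)
    (hrel : n * (1 - γ * A * m ^ 2) = a * m * (1 - γ * B * n ^ 2)) :
    ∃ P : (curveETwist A B a γ).Point, 2 • P ≠ 0 := by
  set T := 1 + a * (γ * B) * m * n
  set X := T / m ^ 2 + a ^ 2 * (γ * B) - γ * A with hX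
  have hXdef : X * m ^ 2 = T + (a ^ 2 * (γ * B) - γ * A) * m ^ 2 := by
    rw [hX]; field_simp; ring
  have hXm : X * m ^ 2 = T * (T - γ * A * m ^ 2) := by
    rw [hXdef]; linear_combination -(a * (γ * B) * m) * hrel
  have hX0 : X ≠ 0 := by
    intro h0
    rw [h0, zero_mul] at hXdef hXm
    rcases mul_eq_zero.mp hXm.symm with hT | hT
    · exact mul_ne_zero (sub_ne_zero.mpr hAB.symm) (pow_ne_zero 2 hm)
        (by linear_combination -hXdef - hT)
    · exact mul_ne_zero (mul_ne_zero (pow_ne_zero 2 ha) hB) (pow_ne_zero 2 hm)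
        (by linear_combination -hXdef - hT)
  -- `X m² = T (T - γA m²)` turns `X (X - a²γB) (X - (a²γB - γA))` into `(X / m)²`.
  apply WeierstrassCurve.Affine.exists_two_smul_ne_zero (x := X) (y := X / m)
  · rw [WeierstrassCurve.Affine.equation_iff]
    simp only [curveETwist]
    field_simp
    refine mul_left_cancel₀ (pow_ne_zero 2 hm) ?_
    linear_combination X * hXm
      - X * (2 * T - γ * A * m ^ 2 + X * m ^ 2 - T - (a ^ 2 * (γ * B) - γ * A) * m ^ 2) * hXdef
  · simp only [WeierstrassCurve.Affine.negY, curveETwist]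
    intro h
    exact div_ne_zero hX0 hm (by linear_combination h / 2)

theorem curveETwist_exists_two_smul_ne_zero_of_sq_eq {L : Type*} [Field L] [Algebra ℚ L]
    [FiniteDimensional ℚ L] {A B : ℤ} {γ : ℕ} {a C c r : ℚ} {u v w β : L}
    (hu : u ^ 2 = algebraMap ℚ L ((γ : ℚ) * (A : ℚ)))
    (hv : v ^ 2 = algebraMap ℚ L ((γ : ℚ) * (B : ℚ))) (hw : w ^ 2 = algebraMap ℚ L C)
    (hgen : ℚ⟮u, v, w⟯ = ⊤) (hv₀ : v ∉ (⊥ : IntermediateField ℚ L)) (hu₀ : u ∉ ℚ⟮v⟯)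
    (hw₀ : w ∉ ℚ⟮u, v⟯) (ha : a ≠ 0) (hβ : ℚ⟮β⟯ = ⊤) (hc : c ≠ 0)
    (h : β ^ 2 = algebraMap ℚ L c * (u + algebraMap ℚ L a * v) + algebraMap ℚ L r) :
    ∃ P : (curveETwist A B a γ).Point, 2 • P ≠ 0 := by
  have hβ' : β ∈ adjoin ℚ (insert w {u, v}) := by
    rw [Set.insert_comm, Set.pair_comm, hgen]; trivial
  obtain ⟨x, hx, y, hy, rfl⟩ :=
    exists_add_mul_of_mem_adjoin_insert (by rw [hw]; exact algebraMap_mem _ C) hβ'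
  have hθ : u + algebraMap ℚ L a * v ∈ ℚ⟮u, v⟯ :=
    add_mem (subset_adjoin ℚ _ (Set.mem_insert u {v}))
      (mul_mem (algebraMap_mem _ a) (subset_adjoin ℚ _ (Set.mem_insert_of_mem u rfl)))
  -- the `w`-coordinate `2 x y` of `β² ∈ ℚ⟮u, v⟯` vanishes
  obtain ⟨-, hxy⟩ := eq_and_eq_of_add_mul_eq hw₀ (x := x ^ 2 + algebraMap ℚ L C * y ^ 2)
    (y := x * y + x * y) (x' := (x + y * w) ^ 2) (y' := 0)
    (add_mem (pow_mem hx 2) (mul_mem (algebraMap_mem _ C) (pow_mem hy 2)))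
    (add_mem (mul_mem hx hy) (mul_mem hx hy))
    (h ▸ add_mem (mul_mem (algebraMap_mem _ c) hθ) (algebraMap_mem _ r)) (zero_mem _)
    (by linear_combination -y ^ 2 * hw)
  have := charZero_of_injective_algebraMap (algebraMap ℚ L).injective
  rcases mul_eq_zero.mp (add_self_eq_zero.mp hxy) with rfl | rfl
  · obtain ⟨x₀, x₁, x₂, x₃, h₁, h₂, h₃⟩ :=
      exists_coeffs_of_mul_sq_eq hu hv hv₀ hu₀ hy (k := C) (c := c) (a := a) (r := r)
        (by linear_combination h - y ^ 2 * hw)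
    obtain ⟨m, n, hm, hrel⟩ := exists_relation_of_coeffs ha hc h₁ h₂ h₃
    exact curveETwist_exists_two_smul_ne_zero ha (ne_zero_of_notMem_bot hv hv₀)
      (ne_sq_mul_of_notMem_adjoin hu hv hu₀ a) hm hrel
  · refine absurd ?_ hw₀
    have hle : ℚ⟮x + 0 * w⟯ ≤ ℚ⟮u, v⟯ := adjoin_simple_le_iff.mpr (by simpa using hx)
    rw [hβ] at hle
    exact hle trivial

theorem stmt_18_general (A B C : ℤ) (a : ℚ) (ha : a ≠ 0)
    (γ : ℕ)
    (L : Type*) [Field L] [Algebra ℚ L] (u v w : L)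
    (hu : u ^ 2 = algebraMap ℚ L ((γ : ℚ) * (A : ℚ)))
    (hv : v ^ 2 = algebraMap ℚ L ((γ : ℚ) * (B : ℚ)))
    (hw : w ^ 2 = algebraMap ℚ L (C : ℚ))
    (hgen : IntermediateField.adjoin ℚ {u, v, w} = ⊤)
    (hdim : Module.finrank ℚ L = 8)
    (htors : ∀ P : (curveETwist A B a γ).Point, 2 • P = 0) :
    2 < minDegree L (u + algebraMap ℚ L a * v) ∧
    Module.finrank (IntermediateField.adjoin ℚ {u + algebraMap ℚ L a * v}) L = 2 := by
  have : FiniteDimensional ℚ L := .of_finrank_pos (by omega)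
  obtain ⟨hv₀, hu₀, hw₀, hK⟩ := triquadratic_tower hu hv hw hgen hdim
  have hθ : ℚ⟮u + algebraMap ℚ L a * v⟯ = ℚ⟮u, v⟯ := adjoin_simple_add_mul_eq hu hv
    (mul_ne_zero two_ne_zero ha) (ne_sq_mul_of_notMem_adjoin hu hv hu₀ a)
  have hθ₄ : finrank ℚ ℚ⟮u + algebraMap ℚ L a * v⟯ = 4 := by rw [hθ, hK]
  refine ⟨lt_minDegree fun α hα f hf => ?_, ?_⟩
  · by_contra! hle
    rcases (by omega : f.natDegree ≤ 1 ∨ f.natDegree = 2) with hf₁ | hf₂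
    · rcases adjoin_simple_aeval_eq_bot_or_top hα hf₁ with h | h <;>
        rw [← hf, h] at hθ₄
      · rw [IntermediateField.finrank_bot] at hθ₄; omega
      · rw [finrank_top'] at hθ₄; omega
    · obtain ⟨β, hβ, c, hc, r, hβ₂⟩ := exists_adjoin_simple_eq_top_sq_eq two_ne_zero hα hf₂
      obtain ⟨P, hP⟩ := curveETwist_exists_two_smul_ne_zero_of_sq_eq hu hv hw hgen hv₀ hu₀ hw₀
        ha hβ hc (hf ▸ hβ₂)
      exact hP (htors P)
  · have := finrank_mul_finrank ℚ ℚ⟮u + algebraMap ℚ L a * v⟯ L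
    rw [hθ₄, hdim] at this
    omega

/-- Let `A, B, C` be distinct square-free nonzero integers, `a` a nonzero rational, and
`γ` a square-free positive integer with `gcd(γ, 2AB) = 1` such that
`L_γ = ℚ(√(γA), √(γB), √C)` is a triquadratic number field. If every rational point `P`
of `E_γ : Y² = X(X − a²Bγ)(X − (a²B − A)γ)` satisfies `2P = O`, then
`min deg_{L_γ}(√(γA) + a√(γB)) > 2 = [L_γ : ℚ(√(γA) + a√(γB))]`. -/
theorem stmt_18 (A B C : ℤ) (hA : Squarefree A) (hB : Squarefree B) (hC : Squarefree C)
    (hAB : A ≠ B) (hAC : A ≠ C) (hBC : B ≠ C)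
    (hA0 : A ≠ 0) (hB0 : B ≠ 0) (hC0 : C ≠ 0) (a : ℚ) (ha : a ≠ 0)
    (γ : ℕ) (hγsf : Squarefree γ) (hγpos : 0 < γ)
    (hγgcd : IsCoprime (γ : ℤ) (2 * A * B))
    (L : Type*) [Field L] [Algebra ℚ L] (u v w : L)
    (hu : u ^ 2 = algebraMap ℚ L ((γ : ℚ) * (A : ℚ)))
    (hv : v ^ 2 = algebraMap ℚ L ((γ : ℚ) * (B : ℚ)))
    (hw : w ^ 2 = algebraMap ℚ L (C : ℚ))
    (hgen : IntermediateField.adjoin ℚ {u, v, w} = ⊤)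
    (hdim : Module.finrank ℚ L = 8)
    (htors : ∀ P : (curveETwist A B a γ).Point, 2 • P = 0) :
    2 < minDegree L (u + algebraMap ℚ L a * v) ∧
    Module.finrank (IntermediateField.adjoin ℚ {u + algebraMap ℚ L a * v}) L = 2 :=
  stmt_18_general A B C a ha γ L u v w hu hv hw hgen hdim htors
end
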